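/- arXiv:1502.06155 — 8 statements merged into one kernel-verified Lean document; each statement's English description precedes it below -/
import Mathlib

section
/- Let ℛ₁,…,ℛₙ be coherent risk measures on L² with risk envelopes 𝒬₁,…,𝒬ₙ, and suppose that all but at most one of the ℛᵢ are finite. Let λ₁,…,λₙ > 0 with λ₁+⋯+λₙ = 1. Then ℛ := λ₁ℛ₁+⋯+λₙℛₙ is a coherent risk measure on L², the Minkowski sum 𝒬 := λ₁𝒬₁+⋯+λₙ𝒬ₙ = {λ₁Q₁+⋯+λₙQₙ : Qᵢ ∈ 𝒬ᵢ} is a nonempty closed convex subset of 𝒫, and ℛ has risk envelope 𝒬, i.e. ℛ(X) = sup_{Q∈𝒬} E[XQ] for all X ∈ L². -/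
open MeasureTheory Filter Topology

noncomputable section

variable {Ω : Type*} [MeasurableSpace Ω] (μ : Measure Ω) [IsProbabilityMeasure μ]

/-- The space `L²(Ω, Σ, P₀; ℝ)`. -/
abbrev L2 := Lp ℝ 2 μ

/-- Expectation of an `L²` random variable. -/
def expect (X : L2 μ) : ℝ := ∫ ω, X ω ∂μ

/-- `E[X Q]`. -/
def pairing (X Q : L2 μ) : ℝ := ∫ ω, X ω * Q ω ∂μ

/-- The set of densities `𝒫 = {Q ∈ L² : Q ≥ 0 a.s., E[Q] = 1}`. -/
def densities : Set (L2 μ) := {Q | (0 : Ω → ℝ) ≤ᵐ[μ] ⇑Q ∧ ∫ ω, Q ω ∂μ = 1}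

/-- The constant random variable as an element of `L²`. -/
def constL2 (c : ℝ) : L2 μ := (memLp_const c).toLp (fun _ => c)

/-- A coherent risk measure (values in `(-∞, +∞]`, i.e. never `⊥`), axioms (A1)–(A5). -/
structure IsCoherent (ℛ : L2 μ → EReal) : Prop where
  nonbot : ∀ X : L2 μ, ℛ X ≠ ⊥
  const : ∀ C : ℝ, ℛ (constL2 μ C) = (C : EReal)
  convex : ∀ X X' : L2 μ, ∀ l : ℝ, 0 ≤ l → l ≤ 1 →
    ℛ ((1 - l) • X + l • X') ≤ ((1 - l : ℝ) : EReal) * ℛ X + (l : EReal) * ℛ X'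
  mono : ∀ X X' : L2 μ, (⇑X ≤ᵐ[μ] ⇑X') → ℛ X ≤ ℛ X'
  closed : ∀ (Xk : ℕ → L2 μ) (X : L2 μ),
    Tendsto (fun k => ‖Xk k - X‖) atTop (𝓝 0) → (∀ k, ℛ (Xk k) ≤ 0) → ℛ X ≤ 0
  posHom : ∀ (X : L2 μ) (l : ℝ), 0 < l → ℛ (l • X) = (l : EReal) * ℛ X

/-- A risk envelope: a nonempty closed convex subset of `𝒫`. -/
def IsRiskEnvelope (𝒬 : Set (L2 μ)) : Prop :=
  𝒬.Nonempty ∧ IsClosed 𝒬 ∧ Convex ℝ 𝒬 ∧ 𝒬 ⊆ densities μ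

/-- `ℛ` has risk envelope `𝒬`: `ℛ(X) = sup_{Q ∈ 𝒬} E[XQ]`. -/
def HasEnvelope (ℛ : L2 μ → EReal) (𝒬 : Set (L2 μ)) : Prop :=
  ∀ X : L2 μ, ℛ X = ⨆ Q ∈ 𝒬, ((pairing μ X Q : ℝ) : EReal)

/-- Inf-convolution of finitely many functionals. -/
def infConv {n : ℕ} (ℛ : Fin n → L2 μ → EReal) (X : L2 μ) : EReal :=
  ⨅ (Y : Fin n → L2 μ) (_ : ∑ i, Y i = X), ∑ i, ℛ i (Y i)

/-- The lower semicontinuous hull (largest lsc minorant) of an `EReal`-valued function. -/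
def lscHull {α : Type*} [TopologicalSpace α] (f : α → EReal) (x : α) : EReal :=
  ⨆ g ∈ {g : α → EReal | LowerSemicontinuous g ∧ ∀ y, g y ≤ f y}, g x

/-!
Each `ℛᵢ X` is the supremum of `⟪X, Q⟫` over `Q ∈ 𝒬ᵢ`. Multiplication by a positive constant
and finite sums commute with suprema in `EReal` (for a sum, pick near-optimal `Qᵢ` independently),
so `∑ λᵢ ℛᵢ` is the support function of the Minkowski combination `𝒬 = ∑ λᵢ 𝒬ᵢ`; the support
function of any nonempty set of densities satisfies (A1)–(A5).

The only delicate point is that `𝒬` is closed. A finite `ℛᵢ` bounds `⟪X, ·⟫` above on `𝒬ᵢ`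
for every `X`, so `𝒬ᵢ` is bounded by Banach–Steinhaus. Through the Riesz map of `L²` into its
dual, bounded closed convex sets become weak-star compact (Banach–Alaoglu) and closed convex sets
become weak-star closed (Hahn–Banach). A sum of compact sets and one closed set is closed in a
topological group, and `𝒬` is the preimage of such a sum under the continuous, injective Riesz map.
-/

open scoped RealInnerProductSpace

lemma EReal.coe_mul_iSup_of_pos {ι : Sort*} {c : ℝ} (hc : 0 < c) (f : ι → EReal) :
    (c : EReal) * ⨆ i, f i = ⨆ i, (c : EReal) * f i := by
  refine Monotone.map_iSup_of_continuousAt ?_ (fun x y h => mul_le_mul_of_nonneg_left h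
    (EReal.coe_nonneg.2 hc.le)) (EReal.coe_mul_bot_of_pos hc)
  have hc0 : (c : EReal) ≠ 0 := by simpa using hc.ne'
  exact (EReal.continuousAt_mul (p := ((c : EReal), ⨆ i, f i)) (Or.inl hc0) (Or.inl hc0)
    (Or.inl (EReal.coe_ne_bot c)) (Or.inl (EReal.coe_ne_top c))).comp
    (continuous_const.prodMk continuous_id).continuousAt

lemma EReal.finsetSum_iSup {ι : Type*} [DecidableEq ι] {κ : ι → Type*} [∀ i, Nonempty (κ i)]
    (s : Finset ι) (f : ∀ i, κ i → EReal) :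
    ∑ i ∈ s, ⨆ j, f i j = ⨆ J : ∀ i, κ i, ∑ i ∈ s, f i (J i) := by
  refine le_antisymm ?_ (iSup_le fun J => Finset.sum_le_sum fun i _ => le_iSup (f i) (J i))
  induction s using Finset.induction_on with
  | empty =>
    simp only [Finset.sum_empty]
    exact le_iSup (fun _ : ∀ i, κ i => (0 : EReal)) fun _ => Classical.arbitrary _
  | insert a s ha ih =>
    rw [Finset.sum_insert ha]
    refine EReal.add_le_of_forall_lt fun x hx y hy => ?_
    obtain ⟨j, hj⟩ := lt_iSup_iff.1 hx
    obtain ⟨J, hJ⟩ := lt_iSup_iff.1 (hy.trans_le ih)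
    have hupdate : ∑ i ∈ s, f i (Function.update J a j i) = ∑ i ∈ s, f i (J i) :=
      Finset.sum_congr rfl fun i hi => by rw [Function.update_of_ne (ne_of_mem_of_not_mem hi ha)]
    calc x + y ≤ f a j + ∑ i ∈ s, f i (J i) := add_le_add hj.le hJ.le
      _ = ∑ i ∈ insert a s, f i (Function.update J a j i) := by
          rw [Finset.sum_insert ha, Function.update_self, hupdate]
      _ ≤ _ := le_iSup (fun J : ∀ i, κ i => ∑ i ∈ insert a s, f i (J i)) _

lemma EReal.coe_finsetSum {ι : Type*} (s : Finset ι) (f : ι → ℝ) :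
    ((∑ i ∈ s, f i : ℝ) : EReal) = ∑ i ∈ s, (f i : EReal) :=
  map_sum (⟨⟨(↑), EReal.coe_zero⟩, EReal.coe_add⟩ : ℝ →+ EReal) f s

section WeakTopology

variable {E : Type*} [NormedAddCommGroup E] [InnerProductSpace ℝ E]

def innerToWeakDual : E →ₗ[ℝ] WeakDual ℝ E where
  toFun x := StrongDual.toWeakDual (innerSL ℝ x)
  map_add' x y := by simp only [map_add]
  map_smul' c x := by simp only [map_smulₛₗ, RingHom.id_apply]; rfl

@[simp]
lemma innerToWeakDual_apply (x y : E) : innerToWeakDual x y = ⟪x, y⟫ := rfl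

lemma innerToWeakDual_injective : Function.Injective (innerToWeakDual : E → WeakDual ℝ E) :=
  fun x y h => ext_inner_right ℝ fun z => by
    simpa only [innerToWeakDual_apply] using DFunLike.congr_fun h z

lemma continuous_innerToWeakDual : Continuous (innerToWeakDual : E → WeakDual ℝ E) :=
  WeakDual.continuous_of_continuous_eval fun y => by
    simp only [innerToWeakDual_apply]
    fun_prop

variable [CompleteSpace E]

lemma Convex.isClosed_image_innerToWeakDual {C : Set E} (hconv : Convex ℝ C) (hC : IsClosed C) :
    IsClosed (innerToWeakDual '' C) := by
  refine isClosed_of_closure_subset fun p hp => ?_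
  set q := (InnerProductSpace.toDual ℝ E).symm (WeakDual.toStrongDual p)
  have hpq : innerToWeakDual q = p := by
    refine DFunLike.ext _ _ fun y => ?_
    rw [innerToWeakDual_apply, ← InnerProductSpace.toDual_apply_apply,
      LinearIsometryEquiv.apply_symm_apply]
    rfl
  by_contra hpC
  obtain ⟨g, s, hgq, hgC⟩ :=
    geometric_hahn_banach_point_closed hconv hC fun hq => hpC ⟨q, hq, hpq⟩
  set X := (InnerProductSpace.toDual ℝ E).symm g
  have hg : ∀ z, g z = ⟪z, X⟫ := fun z => by
    rw [real_inner_comm, ← InnerProductSpace.toDual_apply_apply,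
      LinearIsometryEquiv.apply_symm_apply]
  have hsub : innerToWeakDual '' C ⊆ {w | s ≤ w X} := by
    rintro _ ⟨y, hy, rfl⟩
    change s ≤ innerToWeakDual y X
    simpa only [innerToWeakDual_apply, hg] using (hgC y hy).le
  have hpX : s ≤ p X :=
    closure_minimal hsub (isClosed_le continuous_const (WeakDual.eval_continuous X)) hp
  rw [← hpq, innerToWeakDual_apply, ← hg] at hpX
  exact hpX.not_gt hgq

lemma Convex.isCompact_image_innerToWeakDual {C : Set E} (hconv : Convex ℝ C) (hC : IsClosed C)
    (hbdd : Bornology.IsBounded C) : IsCompact (innerToWeakDual '' C) := by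
  refine WeakDual.isCompact_of_bounded_of_closed ?_ (hconv.isClosed_image_innerToWeakDual hC)
  obtain ⟨R, hR⟩ := hbdd.exists_norm_le
  refine (Metric.isBounded_closedBall (x := (0 : StrongDual ℝ E)) (r := R)).subset ?_
  rintro _ ⟨x, hx, rfl⟩
  change innerSL ℝ x ∈ _
  rw [Metric.mem_closedBall, dist_zero_right]
  exact (innerSL_apply_norm ℝ x).trans_le (hR x hx)

lemma isBounded_of_bddAbove_inner {C : Set E} (h : ∀ x, BddAbove ((fun q => ⟪x, q⟫) '' C)) :
    Bornology.IsBounded C := by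
  choose b hb using h
  have hpt : ∀ x, ∃ M, ∀ q : C, ‖innerSL ℝ (q : E) x‖ ≤ M := fun x =>
    ⟨max (b x) (b (-x)), fun q => by
      have h₁ := hb x ⟨q, q.2, rfl⟩
      have h₂ := hb (-x) ⟨q, q.2, rfl⟩
      simp only [innerSL_apply_apply, Real.norm_eq_abs, abs_le, real_inner_comm x,
        inner_neg_left] at h₁ h₂ ⊢
      constructor <;> linarith [le_max_left (b x) (b (-x)), le_max_right (b x) (b (-x))]⟩
  obtain ⟨M, hM⟩ := banach_steinhaus hpt
  refine isBounded_iff_forall_norm_le.2 ⟨M, fun q hq => ?_⟩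
  simpa only [innerSL_apply_norm] using hM ⟨q, hq⟩

end WeakTopology

section SumOfSets

open Pointwise

lemma isCompact_finsetSum {G ι : Type*} [AddCommMonoid G] [TopologicalSpace G] [ContinuousAdd G]
    {s : Finset ι} {A : ι → Set G} (hA : ∀ i ∈ s, IsCompact (A i)) :
    IsCompact (∑ i ∈ s, A i) := by
  classical
  induction s using Finset.induction_on with
  | empty => simpa only [Finset.sum_empty, ← Set.singleton_zero] using isCompact_singleton
  | insert a s ha ih =>
    rw [Finset.sum_insert ha]
    exact (hA a (s.mem_insert_self a)).add (ih fun i hi => hA i (Finset.mem_insert_of_mem hi))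

lemma isClosed_sum_of_isCompact {G ι : Type*} [AddCommGroup G] [TopologicalSpace G]
    [IsTopologicalAddGroup G] [Fintype ι] [DecidableEq ι] {A : ι → Set G} (i₀ : ι)
    (hA : ∀ i, i ≠ i₀ → IsCompact (A i)) (hA₀ : IsClosed (A i₀)) : IsClosed (∑ i, A i) := by
  rw [← Finset.sum_erase_add _ _ (Finset.mem_univ i₀)]
  exact hA₀.add_left_of_isCompact
    (isCompact_finsetSum fun i hi => hA i (Finset.ne_of_mem_erase hi))

lemma isClosed_sum_of_isBounded {E ι : Type*} [NormedAddCommGroup E] [InnerProductSpace ℝ E]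
    [CompleteSpace E] [Fintype ι] {C : ι → Set E} (i₀ : ι) (hconv : ∀ i, Convex ℝ (C i))
    (hC : ∀ i, IsClosed (C i)) (hbdd : ∀ i, i ≠ i₀ → Bornology.IsBounded (C i)) :
    IsClosed (∑ i, C i) := by
  classical
  rw [← innerToWeakDual_injective.preimage_image (∑ i, C i), Set.image_finsetSum]
  exact (isClosed_sum_of_isCompact i₀
    (fun i hi => (hconv i).isCompact_image_innerToWeakDual (hC i) (hbdd i hi))
    ((hconv i₀).isClosed_image_innerToWeakDual (hC i₀))).preimage continuous_innerToWeakDual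

lemma setOf_sum_smul_eq_range {M ι : Type*} [AddCommMonoid M] [SMul ℝ M] [Fintype ι]
    (𝒬 : ι → Set M) (l : ι → ℝ) :
    {q : M | ∃ Q : ι → M, (∀ i, Q i ∈ 𝒬 i) ∧ q = ∑ i, l i • Q i} =
      Set.range fun Q : (∀ i, 𝒬 i) => ∑ i, l i • (Q i : M) := by
  ext q
  constructor
  · rintro ⟨Q, hQ, rfl⟩
    exact ⟨fun i => ⟨Q i, hQ i⟩, rfl⟩
  · rintro ⟨Q, rfl⟩
    exact ⟨fun i => Q i, fun i => (Q i).2, rfl⟩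

lemma setOf_sum_smul_eq_sum {M ι : Type*} [AddCommMonoid M] [SMul ℝ M] [Fintype ι]
    (𝒬 : ι → Set M) (l : ι → ℝ) :
    {q : M | ∃ Q : ι → M, (∀ i, Q i ∈ 𝒬 i) ∧ q = ∑ i, l i • Q i} = ∑ i, l i • 𝒬 i := by
  ext q
  simp only [Set.mem_fintype_sum, Set.mem_smul_set]
  constructor
  · rintro ⟨Q, hQ, rfl⟩
    exact ⟨fun i => l i • Q i, fun i => ⟨Q i, hQ i, rfl⟩, rfl⟩
  · rintro ⟨g, hg, rfl⟩
    choose Q hQ hgQ using hg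
    exact ⟨Q, hQ, by simp only [hgQ]⟩

end SumOfSets

section Pairing

variable {Ω : Type*} [MeasurableSpace Ω] {μ : Measure Ω}

lemma pairing_eq_inner (X Q : L2 μ) : pairing μ X Q = ⟪X, Q⟫ := by
  rw [L2.inner_def, pairing]
  exact integral_congr_ae (.of_forall fun _ => by simp [mul_comm])

lemma pairing_constL2 [IsProbabilityMeasure μ] (C : ℝ) (Q : L2 μ) :
    pairing μ (constL2 μ C) Q = C * ∫ ω, Q ω ∂μ := by
  rw [pairing, ← integral_const_mul]
  refine integral_congr_ae ?_
  filter_upwards [MemLp.coeFn_toLp (memLp_const (μ := μ) (p := 2) C)] with ω hω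
  rw [constL2, hω]

lemma pairing_mono_left {X X' Q : L2 μ} (hX : ⇑X ≤ᵐ[μ] ⇑X') (hQ : (0 : Ω → ℝ) ≤ᵐ[μ] ⇑Q) :
    pairing μ X Q ≤ pairing μ X' Q := by
  refine integral_mono_ae ((Lp.memLp X).integrable_mul (Lp.memLp Q))
    ((Lp.memLp X').integrable_mul (Lp.memLp Q)) ?_
  filter_upwards [hX, hQ] with ω h h0
  exact mul_le_mul_of_nonneg_right h h0

lemma continuous_pairing_left (Q : L2 μ) : Continuous fun X : L2 μ => pairing μ X Q := by
  simp only [pairing_eq_inner]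
  fun_prop

lemma convex_densities [IsFiniteMeasure μ] : Convex ℝ (densities μ) := by
  rintro Q ⟨hQ, hQ1⟩ Q' ⟨hQ', hQ'1⟩ a b ha hb hab
  have hcoe : ⇑(a • Q + b • Q') =ᵐ[μ] fun ω => a * Q ω + b * Q' ω := by
    filter_upwards [Lp.coeFn_add (a • Q) (b • Q'), Lp.coeFn_smul a Q, Lp.coeFn_smul b Q']
      with ω h h₁ h₂
    rw [h, Pi.add_apply, h₁, h₂]
    rfl
  refine ⟨?_, ?_⟩
  · filter_upwards [hcoe, hQ, hQ'] with ω h h₁ h₂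
    rw [h]
    exact add_nonneg (mul_nonneg ha h₁) (mul_nonneg hb h₂)
  · have hint : ∀ P : L2 μ, Integrable P μ := fun P => (Lp.memLp P).integrable one_le_two
    rw [integral_congr_ae hcoe, integral_add ((hint Q).const_mul a) ((hint Q').const_mul b),
      integral_const_mul, integral_const_mul, hQ1, hQ'1, mul_one, mul_one, hab]

end Pairing

section Envelope

variable {Ω : Type*} [MeasurableSpace Ω] {μ : Measure Ω} {ℛ : L2 μ → EReal} {𝒬 : Set (L2 μ)}

lemma HasEnvelope.pairing_le (h : HasEnvelope μ ℛ 𝒬) (X : L2 μ) {Q : L2 μ} (hQ : Q ∈ 𝒬) :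
    (pairing μ X Q : EReal) ≤ ℛ X :=
  (h X).symm ▸ le_iSup₂ (f := fun Q _ => (pairing μ X Q : EReal)) Q hQ

lemma HasEnvelope.isCoherent [IsProbabilityMeasure μ] (h : HasEnvelope μ ℛ 𝒬) (hne : 𝒬.Nonempty)
    (hsub : 𝒬 ⊆ densities μ) : IsCoherent μ ℛ where
  nonbot X := by
    obtain ⟨Q, hQ⟩ := hne
    exact ne_bot_of_le_ne_bot (EReal.coe_ne_bot _) (h.pairing_le X hQ)
  const C := by
    rw [h, ← biSup_const (a := (C : EReal)) hne]
    exact iSup_congr fun Q => iSup_congr fun hQ => by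
      rw [pairing_constL2, (hsub hQ).2, mul_one]
  convex X X' t ht0 ht1 := by
    rw [h]
    refine iSup₂_le fun Q hQ => ?_
    rw [pairing_eq_inner, inner_add_left, real_inner_smul_left, real_inner_smul_left,
      ← pairing_eq_inner, ← pairing_eq_inner, EReal.coe_add, EReal.coe_mul, EReal.coe_mul]
    exact add_le_add
      (mul_le_mul_of_nonneg_left (h.pairing_le X hQ) (EReal.coe_nonneg.2 (sub_nonneg.2 ht1)))
      (mul_le_mul_of_nonneg_left (h.pairing_le X' hQ) (EReal.coe_nonneg.2 ht0))
  mono X X' hX := by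
    rw [h, h]
    exact iSup₂_mono fun Q hQ => EReal.coe_le_coe_iff.2 (pairing_mono_left hX (hsub hQ).1)
  closed Xk X hlim hle := by
    rw [h]
    refine iSup₂_le fun Q hQ => EReal.coe_nonpos.2 (le_of_tendsto
      ((continuous_pairing_left Q).continuousAt.tendsto.comp
        (tendsto_iff_norm_sub_tendsto_zero.2 hlim)) (.of_forall fun k => ?_))
    exact EReal.coe_nonpos.1 ((h.pairing_le (Xk k) hQ).trans (hle k))
  posHom X c hc := by
    rw [h, h, EReal.coe_mul_iSup_of_pos hc]
    refine iSup_congr fun Q => ?_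
    rw [EReal.coe_mul_iSup_of_pos hc]
    refine iSup_congr fun _ => ?_
    rw [pairing_eq_inner, real_inner_smul_left, ← pairing_eq_inner, EReal.coe_mul]

end Envelope

section Combination

variable {Ω : Type*} [MeasurableSpace Ω] {μ : Measure Ω} {ι : Type*} [Fintype ι]

lemma pairing_sum_smul (X : L2 μ) (l : ι → ℝ) (Q : ι → L2 μ) :
    pairing μ X (∑ i, l i • Q i) = ∑ i, l i * pairing μ X (Q i) := by
  simp only [pairing_eq_inner, inner_sum, real_inner_smul_right]

lemma HasEnvelope.sum_smul {ℛ : ι → L2 μ → EReal} {𝒬 : ι → Set (L2 μ)}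
    (henv : ∀ i, HasEnvelope μ (ℛ i) (𝒬 i)) (hne : ∀ i, (𝒬 i).Nonempty) {l : ι → ℝ}
    (hl : ∀ i, 0 < l i) :
    HasEnvelope μ (fun X => ∑ i, (l i : EReal) * ℛ i X)
      {q : L2 μ | ∃ Q : ι → L2 μ, (∀ i, Q i ∈ 𝒬 i) ∧ q = ∑ i, l i • Q i} := by
  classical
  have : ∀ i, Nonempty (𝒬 i) := fun i => (hne i).to_subtype
  intro X
  calc ∑ i, (l i : EReal) * ℛ i X
      = ∑ i, ⨆ Q : 𝒬 i, ((l i * pairing μ X Q : ℝ) : EReal) := by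
        refine Finset.sum_congr rfl fun i _ => ?_
        simp only [henv i X, iSup_subtype', EReal.coe_mul_iSup_of_pos (hl i), EReal.coe_mul]
    _ = ⨆ Q : (∀ i, 𝒬 i), ∑ i, ((l i * pairing μ X (Q i) : ℝ) : EReal) :=
        EReal.finsetSum_iSup _ _
    _ = _ := by
        simp only [setOf_sum_smul_eq_range, iSup_range, pairing_sum_smul, EReal.coe_finsetSum]

end Combination

section RiskEnvelope

variable {Ω : Type*} [MeasurableSpace Ω] {μ : Measure Ω} {ι : Type*} [Fintype ι]

lemma HasEnvelope.isBounded {ℛ : L2 μ → EReal} {𝒬 : Set (L2 μ)} (h : HasEnvelope μ ℛ 𝒬)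
    (hfin : ∀ X, ℛ X ≠ ⊤) : Bornology.IsBounded 𝒬 :=
  isBounded_of_bddAbove_inner fun X => ⟨(ℛ X).toReal, by
    rintro _ ⟨Q, hQ, rfl⟩
    simpa only [pairing_eq_inner, EReal.toReal_coe] using
      EReal.toReal_le_toReal (h.pairing_le X hQ) (EReal.coe_ne_bot _) (hfin X)⟩

lemma isRiskEnvelope_sum_smul [IsProbabilityMeasure μ] {𝒬 : ι → Set (L2 μ)}
    (hRE : ∀ i, IsRiskEnvelope μ (𝒬 i)) (i₀ : ι) (hbdd : ∀ i, i ≠ i₀ → Bornology.IsBounded (𝒬 i))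
    {l : ι → ℝ} (hl : ∀ i, 0 < l i) (hsum : ∑ i, l i = 1) :
    IsRiskEnvelope μ {q : L2 μ | ∃ Q : ι → L2 μ, (∀ i, Q i ∈ 𝒬 i) ∧ q = ∑ i, l i • Q i} := by
  choose hne hclosed hconv hdens using hRE
  refine ⟨⟨_, fun i => (hne i).some, fun i => (hne i).some_mem, rfl⟩, ?_, ?_, ?_⟩
  · rw [setOf_sum_smul_eq_sum]
    exact isClosed_sum_of_isBounded i₀ (fun i => (hconv i).smul (l i))
      (fun i => (hclosed i).smul_of_ne_zero (hl i).ne') fun i hi => (hbdd i hi).smul₀ (l i)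
  · rw [setOf_sum_smul_eq_sum]
    exact convex_sum _ fun i _ => (hconv i).smul (l i)
  · rintro _ ⟨Q, hQ, rfl⟩
    exact convex_densities.sum_mem (fun i _ => (hl i).le) hsum fun i _ => hdens i (hQ i)

end RiskEnvelope

theorem stmt_0 {n : ℕ} (ℛ : Fin n → L2 μ → EReal) (𝒬 : Fin n → Set (L2 μ))
    (hRE : ∀ i, IsRiskEnvelope μ (𝒬 i))
    (henv : ∀ i, HasEnvelope μ (ℛ i) (𝒬 i))
    (hfin : ∃ i₀ : Fin n, ∀ i, i ≠ i₀ → ∀ X : L2 μ, ℛ i X ≠ ⊤)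
    (l : Fin n → ℝ) (hl : ∀ i, 0 < l i) (hsum : ∑ i, l i = 1) :
    IsCoherent μ (fun X => ∑ i, (l i : EReal) * ℛ i X) ∧
    IsRiskEnvelope μ
      {q : L2 μ | ∃ Q : Fin n → L2 μ, (∀ i, Q i ∈ 𝒬 i) ∧ q = ∑ i, l i • Q i} ∧
    HasEnvelope μ (fun X => ∑ i, (l i : EReal) * ℛ i X)
      {q : L2 μ | ∃ Q : Fin n → L2 μ, (∀ i, Q i ∈ 𝒬 i) ∧ q = ∑ i, l i • Q i} := by
  obtain ⟨i₀, hfin⟩ := hfin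
  have hS := isRiskEnvelope_sum_smul hRE i₀ (fun i hi => (henv i).isBounded (hfin i hi)) hl hsum
  have henvS := HasEnvelope.sum_smul henv (fun i => (hRE i).1) hl
  exact ⟨henvS.isCoherent hS.1 hS.2.2.2, hS, henvS⟩
end
end

section
/- Let A ∈ Σ with P₀(A) > 0 and set 𝒬_A := {Q ∈ 𝒫 : Q = 0 a.s. on Ω∖A}. Then for every X ∈ L², sup_{Q ∈ 𝒬_A} E[XQ] = inf{a ∈ ℝ : P₀({X > a} ∩ A) = 0}, as an equality in (-∞, +∞] (with the infimum of the empty set equal to +∞); that is, the risk measure X ↦ ess sup_{ω∈A} X(ω) has risk envelope 𝒬_A. -/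
open MeasureTheory Filter Topology

noncomputable section

variable {Ω : Type*} [MeasurableSpace Ω] (μ : Measure Ω) [IsProbabilityMeasure μ]

/-! If `Q` is a density vanishing off `A` and `X ≤ a` a.e. on `A`, then `E[XQ] ≤ ∫ a Q = a`, so the
supremum is at most the essential supremum. Conversely, if `b` is below the essential supremum,
`B = {X > b} ∩ A` has positive probability and the uniform density `𝟙_B / P₀(B)` lies in `𝒬_A` with
`E[XQ] = ⨍_B X ≥ b`. -/

lemma ae_le_on_of_measure_inter_eq_zero {α : Type*} [MeasurableSpace α] {ν : Measure α}
    {f : α → ℝ} {A : Set α} {a : ℝ} (h : ν ({x | a < f x} ∩ A) = 0) :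
    ∀ᵐ x ∂ν, x ∈ A → f x ≤ a := by
  filter_upwards [measure_eq_zero_iff_ae_notMem.mp h] with x hx hxA
  exact not_lt.mp fun hlt => hx ⟨hlt, hxA⟩

lemma Lp.integrable_mul_two {α : Type*} [MeasurableSpace α] {ν : Measure α}
    (f g : Lp ℝ 2 ν) : Integrable (fun x => f x * g x) ν :=
  (Lp.memLp f).integrable_mul (Lp.memLp g)

lemma pairing_le_of_ae_le_on {A : Set Ω} {X Q : L2 μ} {a : ℝ} (hQ : Q ∈ densities μ)
    (hQA : ∀ᵐ ω ∂μ, ω ∉ A → Q ω = 0) (hXA : ∀ᵐ ω ∂μ, ω ∈ A → X ω ≤ a) :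
    pairing μ X Q ≤ a := by
  obtain ⟨hQ_nonneg, hQ_one⟩ := hQ
  have hle : (fun ω => X ω * Q ω) ≤ᵐ[μ] fun ω => a * Q ω := by
    filter_upwards [hXA, hQ_nonneg, hQA] with ω hX hQ hQ0
    by_cases hω : ω ∈ A
    · exact mul_le_mul_of_nonneg_right (hX hω) hQ
    · simp [hQ0 hω]
  calc pairing μ X Q ≤ ∫ ω, a * Q ω ∂μ :=
        integral_mono_ae (Lp.integrable_mul_two X Q)
          (((Lp.memLp Q).integrable one_le_two).const_mul a) hle
    _ = a := by rw [integral_const_mul, hQ_one, mul_one]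

def normalizedIndicator {B : Set Ω} (hB : MeasurableSet B) : L2 μ :=
  (μ.real B)⁻¹ • indicatorConstLp 2 hB (measure_ne_top μ B) 1

lemma coeFn_normalizedIndicator {B : Set Ω} (hB : MeasurableSet B) :
    ⇑(normalizedIndicator μ hB) =ᵐ[μ] B.indicator fun _ => (μ.real B)⁻¹ := by
  filter_upwards [Lp.coeFn_smul (μ.real B)⁻¹ (indicatorConstLp 2 hB (measure_ne_top μ B) (1 : ℝ)),
    indicatorConstLp_coeFn (p := 2) (hs := hB) (hμs := measure_ne_top μ B) (c := (1 : ℝ))]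
    with ω hsmul hind
  rw [normalizedIndicator, hsmul, Pi.smul_apply, hind, smul_eq_mul]
  by_cases hω : ω ∈ B <;> simp [hω]

lemma normalizedIndicator_mem_densities {B : Set Ω} (hB : MeasurableSet B) (hB0 : μ B ≠ 0) :
    normalizedIndicator μ hB ∈ densities μ := by
  refine ⟨?_, ?_⟩
  · filter_upwards [coeFn_normalizedIndicator μ hB] with ω h
    rw [Pi.zero_apply, h]
    exact Set.indicator_nonneg (fun _ _ => inv_nonneg.mpr measureReal_nonneg) ω
  · rw [integral_congr_ae (coeFn_normalizedIndicator μ hB), integral_indicator_const _ hB,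
      smul_eq_mul, mul_inv_cancel₀ ((measureReal_ne_zero_iff (measure_ne_top μ B)).mpr hB0)]

lemma normalizedIndicator_eq_zero_of_notMem {B : Set Ω} (hB : MeasurableSet B) :
    ∀ᵐ ω ∂μ, ω ∉ B → normalizedIndicator μ hB ω = 0 := by
  filter_upwards [coeFn_normalizedIndicator μ hB] with ω h hω
  rw [h, Set.indicator_of_notMem hω]

lemma pairing_normalizedIndicator {B : Set Ω} (hB : MeasurableSet B) (X : L2 μ) :
    pairing μ X (normalizedIndicator μ hB) = (μ.real B)⁻¹ * ∫ ω in B, X ω ∂μ := by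
  have h : (fun ω => X ω * normalizedIndicator μ hB ω) =ᵐ[μ]
      fun ω => (μ.real B)⁻¹ * B.indicator X ω := by
    filter_upwards [coeFn_normalizedIndicator μ hB] with ω h
    by_cases hω : ω ∈ B <;> simp [h, hω, mul_comm]
  rw [pairing, integral_congr_ae h, integral_const_mul, integral_indicator hB]

lemma le_pairing_normalizedIndicator {B : Set Ω} (hB : MeasurableSet B) (hB0 : μ B ≠ 0)
    {X : L2 μ} {b : ℝ} (hXB : ∀ ω ∈ B, b ≤ X ω) :
    b ≤ pairing μ X (normalizedIndicator μ hB) := by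
  have hpos : 0 < μ.real B :=
    measureReal_nonneg.lt_of_ne' ((measureReal_ne_zero_iff (measure_ne_top μ B)).mpr hB0)
  rw [pairing_normalizedIndicator, ← div_eq_inv_mul, le_div_iff₀ hpos]
  exact setIntegral_ge_of_const_le_real hB (measure_ne_top μ B) hXB
    ((Lp.memLp X).integrable one_le_two).integrableOn

theorem EReal.biSup_coe_eq_sInf_coe {ι : Type*} {s : Set ι} {f : ι → ℝ} {p : ℝ → Prop}
    (hle : ∀ i ∈ s, ∀ a, p a → f i ≤ a) (hge : ∀ b, ¬ p b → ∃ i ∈ s, b ≤ f i) :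
    ⨆ i ∈ s, ((f i : ℝ) : EReal) = sInf {y : EReal | ∃ a : ℝ, y = a ∧ p a} := by
  refine le_antisymm ?_ ?_
  · refine le_sInf ?_
    rintro _ ⟨a, rfl, ha⟩
    exact iSup₂_le fun i hi => EReal.coe_le_coe_iff.mpr (hle i hi a ha)
  · by_contra! hlt
    obtain ⟨b, hb_sup, hb_inf⟩ := EReal.exists_between_coe_real hlt
    have hpb : ¬ p b := fun hpb =>
      (sInf_le (show (b : EReal) ∈ {y : EReal | ∃ a : ℝ, y = a ∧ p a} from ⟨b, rfl, hpb⟩)).not_gt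
        hb_inf
    obtain ⟨i, hi, hbi⟩ := hge b hpb
    exact hb_sup.not_ge (le_iSup₂_of_le i hi (EReal.coe_le_coe_iff.mpr hbi))

theorem stmt_6 (A : Set Ω) (hA : MeasurableSet A) (X : L2 μ) :
    (⨆ Q ∈ {Q ∈ densities μ | ∀ᵐ ω ∂μ, ω ∉ A → Q ω = 0},
        ((pairing μ X Q : ℝ) : EReal))
      = sInf {y : EReal | ∃ a : ℝ, y = (a : EReal) ∧ μ ({ω | a < X ω} ∩ A) = 0} := by
  refine EReal.biSup_coe_eq_sInf_coe ?_ ?_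
  · rintro Q ⟨hQ, hQA⟩ a ha
    exact pairing_le_of_ae_le_on μ hQ hQA (ae_le_on_of_measure_inter_eq_zero ha)
  · intro b hb
    have hB : MeasurableSet ({ω | b < X ω} ∩ A) :=
      (measurableSet_lt measurable_const (Lp.stronglyMeasurable X).measurable).inter hA
    refine ⟨normalizedIndicator μ hB, ⟨normalizedIndicator_mem_densities μ hB hb, ?_⟩,
      le_pairing_normalizedIndicator μ hB hb fun ω hω => hω.1.le⟩
    filter_upwards [normalizedIndicator_eq_zero_of_notMem μ hB] with ω h hωA
    exact h fun hω => hωA hω.2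
end
end

section
/- Let 0 ≤ γ₂ < 1 < γ₁ and X ∈ L². Then inf_{β ∈ ℝ} { β + E[γ₁(X−β)₊ − γ₂(β−X)₊] } = sup{ E[XQ] : Q ∈ L², γ₂ ≤ Q ≤ γ₁ a.s., E[Q] = 1 }, the infimum on the left is attained, and both sides are finite real numbers. (This is the dual representation of the coherent risk measure S_r associated with the optimized certainty equivalent for the piecewise linear function r(t) = γ₁ t₊ − γ₂ (−t)₊.) -/
open MeasureTheory Filter Topology

noncomputable section

variable {Ω : Type*} [MeasurableSpace Ω] (μ : Measure Ω) [IsProbabilityMeasure μ]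

/-
For `γ₂ ≤ q ≤ γ₁` one has `(x - β) q ≤ γ₁ (x - β)₊ - γ₂ (β - x)₊`, with equality when `q = γ₁`
for `x > β` and `q = γ₂` for `x < β`. Integrating against an admissible `Q` (so `E[Q] = 1`) gives
weak duality `E[XQ] ≤ β + E[γ₁ (X - β)₊ - γ₂ (β - X)₊]` for every `β`. For the reverse, take `β` a
`p`-quantile of `X` with `p = (γ₁ - 1) / (γ₁ - γ₂)` and `Q = γ₁ - (γ₁ - γ₂) V`, where `V` is `1`
on `{X < β}`, `0` on `{X > β}` and a constant on `{X = β}` chosen so that `E[V] = p`; then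
`E[Q] = 1` and equality holds, so `β` attains the infimum and `Q` the supremum.
-/

open Set ProbabilityTheory

section Pointwise

variable {γ₁ γ₂ β x q : ℝ}

theorem mul_le_add_oce (hq₂ : γ₂ ≤ q) (hq₁ : q ≤ γ₁) :
    x * q ≤ β * q + (γ₁ * max (x - β) 0 - γ₂ * max (β - x) 0) := by
  rcases le_total x β with h | h
  · rw [max_eq_right (sub_nonpos.2 h), max_eq_left (sub_nonneg.2 h)]
    nlinarith
  · rw [max_eq_left (sub_nonneg.2 h), max_eq_right (sub_nonpos.2 h)]
    nlinarith

theorem mul_eq_add_oce (hgt : β < x → q = γ₁) (hlt : x < β → q = γ₂) :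
    x * q = β * q + (γ₁ * max (x - β) 0 - γ₂ * max (β - x) 0) := by
  rcases lt_trichotomy x β with h | rfl | h
  · rw [hlt h, max_eq_right (by linarith), max_eq_left (by linarith)]
    ring
  · simp
  · rw [hgt h, max_eq_left (by linarith), max_eq_right (by linarith)]
    ring

end Pointwise

section Integral

variable {ν : Measure Ω} [IsFiniteMeasure ν] {X Q : Ω → ℝ} {γ₁ γ₂ : ℝ}

theorem integrable_oce (hX : Integrable X ν) (γ₁ γ₂ β : ℝ) :
    Integrable (fun ω => γ₁ * max (X ω - β) 0 - γ₂ * max (β - X ω) 0) ν :=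
  (((hX.sub (integrable_const β)).pos_part).const_mul γ₁).sub
    ((((integrable_const β).sub hX).pos_part).const_mul γ₂)

theorem integral_add_oce (hX : Integrable X ν) (hQ : Integrable Q ν) (hQ1 : ∫ ω, Q ω ∂ν = 1)
    (β : ℝ) :
    ∫ ω, (β * Q ω + (γ₁ * max (X ω - β) 0 - γ₂ * max (β - X ω) 0)) ∂ν =
      β + ∫ ω, (γ₁ * max (X ω - β) 0 - γ₂ * max (β - X ω) 0) ∂ν := by
  rw [integral_add (hQ.const_mul β) (integrable_oce hX γ₁ γ₂ β), integral_const_mul, hQ1, mul_one]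

theorem integral_mul_le_oce (hX : Integrable X ν) (hQm : AEStronglyMeasurable Q ν)
    (hQ : ∀ᵐ ω ∂ν, γ₂ ≤ Q ω ∧ Q ω ≤ γ₁) (hQ1 : ∫ ω, Q ω ∂ν = 1) (β : ℝ) :
    ∫ ω, X ω * Q ω ∂ν ≤ β + ∫ ω, (γ₁ * max (X ω - β) 0 - γ₂ * max (β - X ω) 0) ∂ν := by
  have hQb : ∀ᵐ ω ∂ν, ‖Q ω‖ ≤ max |γ₂| |γ₁| := hQ.mono fun ω h => abs_le_max_abs_abs h.1 h.2
  have hQi : Integrable Q ν := (MemLp.of_bound hQm _ hQb).integrable le_rfl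
  rw [← integral_add_oce hX hQi hQ1]
  exact integral_mono_ae (hX.mul_bdd hQm hQb)
    ((hQi.const_mul β).add (integrable_oce hX γ₁ γ₂ β)) (hQ.mono fun ω h => mul_le_add_oce h.1 h.2)

theorem integral_mul_eq_oce (hX : Integrable X ν) (hQ : Integrable Q ν) (hQ1 : ∫ ω, Q ω ∂ν = 1)
    {β : ℝ} (hQβ : ∀ᵐ ω ∂ν, (β < X ω → Q ω = γ₁) ∧ (X ω < β → Q ω = γ₂)) :
    ∫ ω, X ω * Q ω ∂ν = β + ∫ ω, (γ₁ * max (X ω - β) 0 - γ₂ * max (β - X ω) 0) ∂ν := by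
  rw [← integral_add_oce hX hQ hQ1]
  exact integral_congr_ae (hQβ.mono fun ω h => mul_eq_add_oce h.1 h.2)

end Integral

theorem exists_measureReal_Iio_le_le_measureReal_Iic (ν : Measure ℝ) [IsProbabilityMeasure ν]
    {p : ℝ} (hp0 : 0 < p) (hp1 : p < 1) :
    ∃ β, ν.real (Iio β) ≤ p ∧ p ≤ ν.real (Iic β) := by
  set S := {x | p ≤ cdf ν x}
  have hS : S.Nonempty := ((tendsto_cdf_atTop ν).eventually (eventually_ge_nhds hp1)).exists
  obtain ⟨x₀, hx₀⟩ := ((tendsto_cdf_atBot ν).eventually (eventually_lt_nhds hp0)).exists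
  have hSbdd : BddBelow S := ⟨x₀, fun x hx =>
    le_of_not_gt fun hlt => (hx.trans (monotone_cdf ν hlt.le)).not_gt hx₀⟩
  refine ⟨sInf S, ?_, ?_⟩
  · have hlim : Function.leftLim (cdf ν) (sInf S) ≤ p :=
      le_of_tendsto ((monotone_cdf ν).tendsto_leftLim _) <| eventually_nhdsWithin_of_forall
        fun x hx => (not_le.1 (notMem_of_lt_csInf hx hSbdd : x ∉ S)).le
    have hIio := (cdf ν).measure_Iio (tendsto_cdf_atBot ν) (sInf S)
    rw [measure_cdf] at hIio
    rw [measureReal_def, hIio, sub_zero, ENNReal.toReal_ofReal']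
    exact max_le hlim hp0.le
  · rw [← cdf_eq_real]
    refine ge_of_tendsto (((cdf ν).right_continuous _).mono Ioi_subset_Ici_self) ?_
    refine eventually_nhdsWithin_of_forall fun x hx => ?_
    obtain ⟨s, hs, hsx⟩ := exists_lt_of_csInf_lt hS hx
    exact hs.trans (monotone_cdf ν hsx.le)

section Extremal

variable {ν : Measure Ω} {X : Ω → ℝ}

theorem exists_integral_eq_of_measureReal_lt_le_le [IsFiniteMeasure ν] (hX : Measurable X)
    {β p : ℝ} (hlo : ν.real {ω | X ω < β} ≤ p) (hhi : p ≤ ν.real {ω | X ω ≤ β}) :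
    ∃ V : Ω → ℝ, Measurable V ∧ (∀ ω, 0 ≤ V ω ∧ V ω ≤ 1) ∧ (∀ ω, X ω < β → V ω = 1) ∧
      (∀ ω, β < X ω → V ω = 0) ∧ ∫ ω, V ω ∂ν = p := by
  have hle : MeasurableSet {ω | X ω ≤ β} := measurableSet_le hX measurable_const
  have hlt : MeasurableSet {ω | X ω < β} := measurableSet_lt hX measurable_const
  -- `V` interpolates between the indicators of `{X ≤ β}` and `{X < β}`; when these have the
  -- same measure, `θ = 0` by the junk value of division and `p` is that measure.
  set θ := (p - ν.real {ω | X ω < β}) / (ν.real {ω | X ω ≤ β} - ν.real {ω | X ω < β})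
  have hθ0 : 0 ≤ θ := div_nonneg (by linarith) (by linarith)
  have hθ1 : θ ≤ 1 := div_le_one_of_le₀ (by linarith) (by linarith)
  refine ⟨fun ω => {ω | X ω ≤ β}.indicator (fun _ => θ) ω +
    {ω | X ω < β}.indicator (fun _ => 1 - θ) ω, ?_, fun ω => ?_, fun ω h => ?_, fun ω h => ?_, ?_⟩
  · exact (measurable_const.indicator hle).add (measurable_const.indicator hlt)
  · by_cases h₁ : X ω ≤ β <;> by_cases h₂ : X ω < β <;>
      simp [indicator, h₁, h₂, hθ0, hθ1]
  · simp [indicator, h, h.le]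
  · simp [indicator, h.not_ge, h.not_gt]
  · rw [integral_add ((integrable_const θ).indicator hle) ((integrable_const _).indicator hlt),
      integral_indicator_const _ hle, integral_indicator_const _ hlt, smul_eq_mul, smul_eq_mul]
    have hθ : θ * (ν.real {ω | X ω ≤ β} - ν.real {ω | X ω < β}) =
        p - ν.real {ω | X ω < β} := div_mul_cancel_of_imp fun h => by linarith
    linear_combination hθ

theorem exists_extremal_density [IsProbabilityMeasure ν] (hX : Measurable X) {γ₁ γ₂ : ℝ}
    (h21 : γ₂ < 1) (h1 : 1 < γ₁) :
    ∃ β : ℝ, ∃ Q : Ω → ℝ, Measurable Q ∧ (∀ ω, γ₂ ≤ Q ω ∧ Q ω ≤ γ₁) ∧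
      (∀ ω, (β < X ω → Q ω = γ₁) ∧ (X ω < β → Q ω = γ₂)) ∧ ∫ ω, Q ω ∂ν = 1 := by
  have hγ : 0 < γ₁ - γ₂ := by linarith
  have := Measure.isProbabilityMeasure_map (μ := ν) hX.aemeasurable
  obtain ⟨β, hlo, hhi⟩ := exists_measureReal_Iio_le_le_measureReal_Iic (ν.map X)
    (div_pos (sub_pos.2 h1) hγ) ((div_lt_one hγ).2 (by linarith : γ₁ - 1 < γ₁ - γ₂))
  rw [map_measureReal_apply hX measurableSet_Iio] at hlo
  rw [map_measureReal_apply hX measurableSet_Iic] at hhi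
  obtain ⟨V, hVm, hV01, hV1, hV0, hVp⟩ := exists_integral_eq_of_measureReal_lt_le_le hX hlo hhi
  refine ⟨β, fun ω => γ₁ - (γ₁ - γ₂) * V ω, measurable_const.sub (hVm.const_mul _),
    fun ω => ⟨by nlinarith [hV01 ω], by nlinarith [hV01 ω]⟩,
    fun ω => ⟨fun h => by simp [hV0 ω h], fun h => by simp [hV1 ω h]⟩, ?_⟩
  have hVi : Integrable V ν :=
    (MemLp.of_bound hVm.aestronglyMeasurable 1 (ae_of_all _ fun ω => by
      rw [Real.norm_eq_abs, abs_le]; constructor <;> linarith [hV01 ω])).integrable le_rfl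
  rw [integral_sub (integrable_const _) (hVi.const_mul _), integral_const_mul, hVp,
    integral_const, probReal_univ, one_smul]
  field_simp
  ring

end Extremal

theorem stmt_7 (γ₁ γ₂ : ℝ) (h21 : γ₂ < 1) (h1 : 1 < γ₁) (X : L2 μ) :
    ∃ βs : ℝ,
      (∀ β : ℝ,
        βs + ∫ ω, (γ₁ * max (X ω - βs) 0 - γ₂ * max (βs - X ω) 0) ∂μ ≤
        β + ∫ ω, (γ₁ * max (X ω - β) 0 - γ₂ * max (β - X ω) 0) ∂μ) ∧
      IsLUB {e : ℝ | ∃ Q : L2 μ, (∀ᵐ ω ∂μ, γ₂ ≤ Q ω ∧ Q ω ≤ γ₁) ∧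
          (∫ ω, Q ω ∂μ) = 1 ∧ e = pairing μ X Q}
        (βs + ∫ ω, (γ₁ * max (X ω - βs) 0 - γ₂ * max (βs - X ω) 0) ∂μ) := by
  have hX : Integrable X μ := (Lp.memLp X).integrable one_le_two
  obtain ⟨β, Q, hQm, hQb, hQβ, hQ1⟩ :=
    exists_extremal_density (ν := μ) (Lp.stronglyMeasurable X).measurable h21 h1
  have hQ2 : MemLp Q 2 μ := MemLp.of_bound hQm.aestronglyMeasurable _
    (ae_of_all _ fun ω => abs_le_max_abs_abs (hQb ω).1 (hQb ω).2)
  have hQ : hQ2.toLp Q =ᵐ[μ] Q := hQ2.coeFn_toLp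
  have hQb' : ∀ᵐ ω ∂μ, γ₂ ≤ hQ2.toLp Q ω ∧ hQ2.toLp Q ω ≤ γ₁ := hQ.mono fun ω h => h ▸ hQb ω
  have hQ1' : ∫ ω, hQ2.toLp Q ω ∂μ = 1 := (integral_congr_ae hQ).trans hQ1
  have hopt : pairing μ X (hQ2.toLp Q) =
      β + ∫ ω, (γ₁ * max (X ω - β) 0 - γ₂ * max (β - X ω) 0) ∂μ :=
    integral_mul_eq_oce hX ((Lp.memLp _).integrable one_le_two) hQ1' (hQ.mono fun ω h => h ▸ hQβ ω)
  have hweak : ∀ Q' : L2 μ, (∀ᵐ ω ∂μ, γ₂ ≤ Q' ω ∧ Q' ω ≤ γ₁) → ∫ ω, Q' ω ∂μ = 1 → ∀ β' : ℝ,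
      pairing μ X Q' ≤ β' + ∫ ω, (γ₁ * max (X ω - β') 0 - γ₂ * max (β' - X ω) 0) ∂μ :=
    fun Q' hb h1 => integral_mul_le_oce hX (Lp.aestronglyMeasurable Q') hb h1
  refine ⟨β, fun β' => hopt ▸ hweak _ hQb' hQ1' β', ?_, fun e he => hopt ▸ he ⟨_, hQb', hQ1', rfl⟩⟩
  rintro e ⟨Q', hb, h1, rfl⟩
  exact hweak Q' hb h1 β
end
end

section
/- Let 0 ≤ γ₂ < 1 < γ₁, X ∈ L², and let F(ζ) := P₀(X ≤ ζ) be the cumulative distribution function of X. Then the set {ζ ∈ ℝ : F(ζ) ≥ (γ₁−1)/(γ₁−γ₂)} has a minimum β*, and β* minimizes the function g(β) := β + E[γ₁(X−β)₊ − γ₂(β−X)₊] over β ∈ ℝ, i.e. g(β*) = inf_{β ∈ ℝ} g(β). -/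
open MeasureTheory Filter Topology

noncomputable section

variable {Ω : Type*} [MeasurableSpace Ω] (μ : Measure Ω) [IsProbabilityMeasure μ]

/-!
The loss `ℓ(t) = γ₁ t₊ - γ₂ (-t)₊` has slope `γ₂` left of `0` and `γ₁` right of it. Hence, with
`τ = (γ₁ - 1)/(γ₁ - γ₂)`, for `c ≤ b` one has `g(b) - g(c) ≥ (b - c)((γ₁ - γ₂) F(c) - (γ₁ - 1))`,
and for `b ≤ c` the same bound holds with `F(c)` replaced by `P(X < c) = F(c-)`.
By right-continuity of `F` the infimum `β*` of `{F ≥ τ}` satisfies `F(β*) ≥ τ`, while `F < τ` to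
its left gives `F(β*-) ≤ τ`; so both bounds are nonnegative at `c = β*`.
Only the law of `X` matters, so the argument is carried out for a probability measure on `ℝ`.
-/

open ProbabilityTheory Set

namespace StieltjesFunction

variable (f : StieltjesFunction ℝ) {τ : ℝ}

lemma bddBelow_setOf_le (h : ∃ x, f x < τ) : BddBelow {x | τ ≤ f x} := by
  obtain ⟨x₀, hx₀⟩ := h
  exact ⟨x₀, fun x hx => le_of_lt (f.mono.reflect_lt (hx₀.trans_le hx))⟩

lemma isLeast_sInf_setOf_le (hlow : ∃ x, f x < τ) (hhigh : ∃ x, τ ≤ f x) :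
    IsLeast {x | τ ≤ f x} (sInf {x | τ ≤ f x}) := by
  set S := {x | τ ≤ f x}
  have hS : BddBelow S := f.bddBelow_setOf_le hlow
  refine ⟨?_, fun x hx => csInf_le hS hx⟩
  have hright : ∀ x ∈ Ioi (sInf S), τ ≤ f x := fun x hx => by
    obtain ⟨y, hyS, hyx⟩ := exists_lt_of_csInf_lt hhigh (mem_Ioi.1 hx)
    exact le_trans (b := f y) hyS (f.mono hyx.le)
  exact ge_of_tendsto ((f.right_continuous _).mono Ioi_subset_Ici_self)
    (eventually_nhdsWithin_of_forall hright)

lemma leftLim_sInf_setOf_le_le (hlow : ∃ x, f x < τ) :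
    Function.leftLim f (sInf {x | τ ≤ f x}) ≤ τ :=
  le_of_tendsto (f.mono.tendsto_leftLim _) <| eventually_nhdsWithin_of_forall fun _ hx =>
    (not_le.1 (notMem_of_lt_csInf (s := {x | τ ≤ f x}) hx (f.bddBelow_setOf_le hlow))).le

end StieltjesFunction

lemma ProbabilityTheory.measure_Iio_eq_ofReal_leftLim_cdf (ν : Measure ℝ) [IsProbabilityMeasure ν]
    (x : ℝ) : ν (Iio x) = ENNReal.ofReal (Function.leftLim (cdf ν) x) := by
  rw [← measure_cdf ν, StieltjesFunction.measure_Iio _ (tendsto_cdf_atBot ν), sub_zero, measure_cdf]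

section Objective

variable {γ₁ γ₂ : ℝ}

lemma loss_add_le_loss_of_le (hγ : γ₂ ≤ γ₁) {b c : ℝ} (hcb : c ≤ b) (x : ℝ) :
    γ₁ * max (x - c) 0 - γ₂ * max (c - x) 0 + (c - b) * (γ₁ - (γ₁ - γ₂) * (Iic c).indicator 1 x)
      ≤ γ₁ * max (x - b) 0 - γ₂ * max (b - x) 0 := by
  rcases le_or_gt x c with hx | hx
  · simp only [indicator_of_mem (mem_Iic.2 hx), Pi.one_apply, max_eq_right (sub_nonpos.2 hx),
      max_eq_left (sub_nonneg.2 hx), max_eq_right (sub_nonpos.2 (hx.trans hcb)),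
      max_eq_left (sub_nonneg.2 (hx.trans hcb))]
    linarith
  · simp only [indicator_of_notMem (notMem_Iic.2 hx), max_eq_left (sub_nonneg.2 hx.le),
      max_eq_right (sub_nonpos.2 hx.le)]
    rcases le_total x b with hxb | hxb
    · simp only [max_eq_right (sub_nonpos.2 hxb), max_eq_left (sub_nonneg.2 hxb)]
      nlinarith
    · simp only [max_eq_left (sub_nonneg.2 hxb), max_eq_right (sub_nonpos.2 hxb)]
      linarith

lemma loss_add_le_loss_of_ge (hγ : γ₂ ≤ γ₁) {b c : ℝ} (hbc : b ≤ c) (x : ℝ) :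
    γ₁ * max (x - c) 0 - γ₂ * max (c - x) 0 + (c - b) * (γ₁ - (γ₁ - γ₂) * (Iio c).indicator 1 x)
      ≤ γ₁ * max (x - b) 0 - γ₂ * max (b - x) 0 := by
  rcases lt_or_ge x c with hx | hx
  · simp only [indicator_of_mem (mem_Iio.2 hx), Pi.one_apply, max_eq_right (sub_nonpos.2 hx.le),
      max_eq_left (sub_nonneg.2 hx.le)]
    rcases le_total x b with hxb | hxb
    · simp only [max_eq_right (sub_nonpos.2 hxb), max_eq_left (sub_nonneg.2 hxb)]
      linarith
    · simp only [max_eq_left (sub_nonneg.2 hxb), max_eq_right (sub_nonpos.2 hxb)]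
      nlinarith
  · simp only [indicator_of_notMem (notMem_Iio.2 hx), max_eq_left (sub_nonneg.2 hx),
      max_eq_right (sub_nonpos.2 hx), max_eq_left (sub_nonneg.2 (hbc.trans hx)),
      max_eq_right (sub_nonpos.2 (hbc.trans hx))]
    linarith

lemma integrable_loss {ν : Measure ℝ} [IsFiniteMeasure ν] (hν : Integrable id ν) (γ₁ γ₂ β : ℝ) :
    Integrable (fun x => γ₁ * max (x - β) 0 - γ₂ * max (β - x) 0) ν :=
  ((hν.sub (integrable_const β)).pos_part.const_mul γ₁).sub
    (((integrable_const β).sub hν).pos_part.const_mul γ₂)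

/-- The paper's `g(β)` for a random variable with law `ν`. -/
def lossObjective (ν : Measure ℝ) (γ₁ γ₂ β : ℝ) : ℝ :=
  β + ∫ x, (γ₁ * max (x - β) 0 - γ₂ * max (β - x) 0) ∂ν

variable {ν : Measure ℝ}

lemma lossObjective_add_le [IsProbabilityMeasure ν] (hν : Integrable id ν) {A : Set ℝ}
    (hA : MeasurableSet A) {b c : ℝ}
    (h : ∀ x, γ₁ * max (x - c) 0 - γ₂ * max (c - x) 0 + (c - b) * (γ₁ - (γ₁ - γ₂) * A.indicator 1 x)
      ≤ γ₁ * max (x - b) 0 - γ₂ * max (b - x) 0) :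
    lossObjective ν γ₁ γ₂ c + (b - c) * ((γ₁ - γ₂) * ν.real A - (γ₁ - 1))
      ≤ lossObjective ν γ₁ γ₂ b := by
  have hind : Integrable (A.indicator (1 : ℝ → ℝ)) ν := (integrable_const 1).indicator hA
  have hcorr : Integrable (fun x => (c - b) * (γ₁ - (γ₁ - γ₂) * A.indicator 1 x)) ν :=
    ((integrable_const _).sub (hind.const_mul _)).const_mul _
  have hcorr_eq : ∫ x, (c - b) * (γ₁ - (γ₁ - γ₂) * A.indicator 1 x) ∂ν
      = (c - b) * (γ₁ - (γ₁ - γ₂) * ν.real A) := by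
    rw [integral_const_mul, integral_sub (integrable_const _) (hind.const_mul _),
      integral_const_mul, integral_indicator_one hA]
    simp
  have hint : ∫ x, (γ₁ * max (x - c) 0 - γ₂ * max (c - x) 0) ∂ν
        + (c - b) * (γ₁ - (γ₁ - γ₂) * ν.real A)
      ≤ ∫ x, (γ₁ * max (x - b) 0 - γ₂ * max (b - x) 0) ∂ν := by
    rw [← hcorr_eq, ← integral_add (integrable_loss hν γ₁ γ₂ c) hcorr]
    exact integral_mono ((integrable_loss hν γ₁ γ₂ c).add hcorr) (integrable_loss hν γ₁ γ₂ b) h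
  unfold lossObjective
  linarith

variable [IsProbabilityMeasure ν]

lemma lossObjective_le_of_le (hν : Integrable id ν) (hγ : γ₂ < γ₁) {b c : ℝ}
    (hc : (γ₁ - 1) / (γ₁ - γ₂) ≤ cdf ν c) (hcb : c ≤ b) :
    lossObjective ν γ₁ γ₂ c ≤ lossObjective ν γ₁ γ₂ b := by
  rw [div_le_iff₀' (sub_pos.2 hγ), cdf_eq_real] at hc
  have := lossObjective_add_le hν measurableSet_Iic (loss_add_le_loss_of_le hγ.le hcb)
  nlinarith [mul_nonneg (sub_nonneg.2 hcb) (sub_nonneg.2 hc)]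

lemma lossObjective_le_of_ge (hν : Integrable id ν) (hγ : γ₂ < γ₁) {b c : ℝ}
    (hc : ν.real (Iio c) ≤ (γ₁ - 1) / (γ₁ - γ₂)) (hbc : b ≤ c) :
    lossObjective ν γ₁ γ₂ c ≤ lossObjective ν γ₁ γ₂ b := by
  rw [le_div_iff₀' (sub_pos.2 hγ)] at hc
  have := lossObjective_add_le hν measurableSet_Iio (loss_add_le_loss_of_ge hγ.le hbc)
  nlinarith [mul_nonneg (sub_nonneg.2 hbc) (sub_nonneg.2 hc)]

end Objective

theorem exists_isLeast_setOf_le_cdf_and_lossObjective_le (ν : Measure ℝ) [IsProbabilityMeasure ν]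
    (hν : Integrable id ν) {γ₁ γ₂ : ℝ} (h21 : γ₂ < 1) (h1 : 1 < γ₁) :
    ∃ βs : ℝ, IsLeast {ζ | (γ₁ - 1) / (γ₁ - γ₂) ≤ cdf ν ζ} βs ∧
      ∀ β, lossObjective ν γ₁ γ₂ βs ≤ lossObjective ν γ₁ γ₂ β := by
  have hγ : γ₂ < γ₁ := h21.trans h1
  set τ := (γ₁ - 1) / (γ₁ - γ₂)
  have hτ₀ : 0 < τ := div_pos (by linarith) (by linarith)
  have hτ₁ : τ < 1 := (div_lt_one (by linarith)).2 (by linarith)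
  have hlow : ∃ x, cdf ν x < τ := ((tendsto_cdf_atBot ν).eventually_lt_const hτ₀).exists
  have hhigh : ∃ x, τ ≤ cdf ν x :=
    ((tendsto_cdf_atTop ν).eventually_const_lt hτ₁).exists.imp fun _ => le_of_lt
  have hleast := (cdf ν).isLeast_sInf_setOf_le hlow hhigh
  refine ⟨_, hleast, fun β => ?_⟩
  rcases le_total (sInf {x | τ ≤ cdf ν x}) β with h | h
  · exact lossObjective_le_of_le hν hγ hleast.1 h
  · refine lossObjective_le_of_ge hν hγ ?_ h
    rw [measureReal_def, measure_Iio_eq_ofReal_leftLim_cdf, ENNReal.toReal_ofReal']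
    exact max_le ((cdf ν).leftLim_sInf_setOf_le_le hlow) hτ₀.le

theorem stmt_8 (γ₁ γ₂ : ℝ) (h21 : γ₂ < 1) (h1 : 1 < γ₁) (X : L2 μ) :
    ∃ βs : ℝ,
      IsLeast {ζ : ℝ | (γ₁ - 1) / (γ₁ - γ₂) ≤ (μ {ω | X ω ≤ ζ}).toReal} βs ∧
      ∀ β : ℝ,
        βs + ∫ ω, (γ₁ * max (X ω - βs) 0 - γ₂ * max (βs - X ω) 0) ∂μ ≤
        β + ∫ ω, (γ₁ * max (X ω - β) 0 - γ₂ * max (β - X ω) 0) ∂μ := by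
  have hX : Measurable X := (Lp.stronglyMeasurable X).measurable
  have := Measure.isProbabilityMeasure_map (μ := μ) hX.aemeasurable
  have hlaw : Integrable id (μ.map X) :=
    (integrable_map_measure aestronglyMeasurable_id hX.aemeasurable).2
      ((Lp.memLp X).integrable one_le_two)
  have hcdf : ∀ ζ, cdf (μ.map X) ζ = (μ {ω | X ω ≤ ζ}).toReal := fun ζ => by
    rw [cdf_eq_real, map_measureReal_apply hX measurableSet_Iic]
    rfl
  have hobj : ∀ β, lossObjective (μ.map X) γ₁ γ₂ β
      = β + ∫ ω, (γ₁ * max (X ω - β) 0 - γ₂ * max (β - X ω) 0) ∂μ := fun β => by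
    rw [lossObjective, integral_map hX.aemeasurable (by fun_prop)]
  obtain ⟨βs, hleast, hmin⟩ :=
    exists_isLeast_setOf_le_cdf_and_lossObjective_le (μ.map X) hlaw h21 h1
  simp only [hcdf, hobj] at hleast hmin
  exact ⟨βs, hleast, hmin⟩
end
end

section
/- Let α ∈ (0,1) and X ∈ L². Then CVaR_α(X) := inf_{β ∈ ℝ} { β + (1−α)⁻¹ E[(X−β)₊] } satisfies CVaR_α(X) = sup{ E[XQ] : Q ∈ L², 0 ≤ Q ≤ (1−α)⁻¹ a.s., E[Q] = 1 }, and the infimum defining CVaR_α(X) is attained. -/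
/-!
Weak duality is pointwise: if `0 ≤ Q ≤ c := (1 - α)⁻¹` and `E[Q] = 1`, then
`E[XQ] = β + E[(X - β)Q]` and `(X - β)Q ≤ c (X - β)₊`, so every `E[XQ]` is below every value
`β + c E[(X - β)₊]`. Equality holds at an upper `(1 - α)`-quantile `β*` of `X`, i.e.
`P(X > β*) ≤ 1 - α ≤ P(X ≥ β*)` (which exists by right continuity of the distribution function):
take `Q = c` on `{X > β*}`, `Q = 0` on `{X < β*}`, and on the atom `{X = β*}` the constant that
makes `E[Q] = 1`. Hence `β*` attains the infimum and the common value is the supremum.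
-/

open MeasureTheory Filter Topology

noncomputable section

variable {Ω : Type*} [MeasurableSpace Ω] (μ : Measure Ω) [IsProbabilityMeasure μ]

open Set

theorem StieltjesFunction.exists_le_and_leftLim_le (F : StieltjesFunction ℝ) {α : ℝ}
    (hlow : ∃ x, F x < α) (hhigh : ∃ x, α ≤ F x) : ∃ b, α ≤ F b ∧ Function.leftLim F b ≤ α := by
  set S := {x | α ≤ F x}
  obtain ⟨x₀, hx₀⟩ := hlow
  have hbdd : BddBelow S :=
    ⟨x₀, fun y hy => not_lt.1 fun hyx => (hy.trans (F.mono hyx.le)).not_gt hx₀⟩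
  refine ⟨sInf S, ?_, ?_⟩
  · have hright : ∀ᶠ x in 𝓝[>] sInf S, α ≤ F x := eventually_nhdsWithin_of_forall fun x hx => by
      obtain ⟨y, hyS, hyx⟩ := exists_lt_of_csInf_lt hhigh hx
      exact le_trans hyS (F.mono hyx.le)
    exact ge_of_tendsto ((F.right_continuous _).mono Ioi_subset_Ici_self) hright
  · have hleft : ∀ᶠ x in 𝓝[<] sInf S, F x ≤ α := eventually_nhdsWithin_of_forall fun x hx =>
      (not_le.1 fun hxS => (csInf_le hbdd hxS).not_gt hx).le
    exact le_of_tendsto (F.mono.tendsto_leftLim _) hleft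

open ProbabilityTheory in
theorem exists_measureReal_Ioi_le_le_Ici (ν : Measure ℝ) [IsProbabilityMeasure ν]
    {s : ℝ} (hs₀ : 0 < s) (hs₁ : s < 1) : ∃ b, ν.real (Ioi b) ≤ s ∧ s ≤ ν.real (Ici b) := by
  have hlow : ∃ x, cdf ν x < 1 - s :=
    ((tendsto_cdf_atBot ν).eventually (gt_mem_nhds (by linarith))).exists
  have hhigh : ∃ x, 1 - s ≤ cdf ν x :=
    ((tendsto_cdf_atTop ν).eventually (le_mem_nhds (by linarith))).exists
  obtain ⟨b, hb, hleft⟩ := (cdf ν).exists_le_and_leftLim_le hlow hhigh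
  refine ⟨b, ?_, ?_⟩
  · rw [measureReal_def, ← measure_cdf ν, (cdf ν).measure_Ioi (tendsto_cdf_atTop ν),
      ENNReal.toReal_ofReal']
    exact max_le (by linarith) hs₀.le
  · rw [measureReal_def, ← measure_cdf ν, (cdf ν).measure_Ici (tendsto_cdf_atTop ν),
      ENNReal.toReal_ofReal']
    exact le_max_of_le_left (by linarith)

theorem exists_measureReal_preimage_Ioi_le_le_Ici {Ω : Type*} [MeasurableSpace Ω]
    {μ : Measure Ω} [IsProbabilityMeasure μ] {g : Ω → ℝ} (hg : Measurable g) {s : ℝ}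
    (hs₀ : 0 < s) (hs₁ : s < 1) :
    ∃ b, μ.real (g ⁻¹' Ioi b) ≤ s ∧ s ≤ μ.real (g ⁻¹' Ici b) := by
  have := Measure.isProbabilityMeasure_map (μ := μ) hg.aemeasurable
  simpa only [map_measureReal_apply hg measurableSet_Ioi,
    map_measureReal_apply hg measurableSet_Ici] using
    exists_measureReal_Ioi_le_le_Ici (μ.map g) hs₀ hs₁

section BoundedDensity

variable {Ω : Type*} [MeasurableSpace Ω] {μ : Measure Ω}

structure IsBoundedDensity (μ : Measure Ω) (c : ℝ) (q : Ω → ℝ) : Prop where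
  aestronglyMeasurable : AEStronglyMeasurable q μ
  ae_bounds : ∀ᵐ ω ∂μ, 0 ≤ q ω ∧ q ω ≤ c
  integral_eq_one : ∫ ω, q ω ∂μ = 1

namespace IsBoundedDensity

variable {c : ℝ} {q g : Ω → ℝ}

theorem ae_norm_le (hq : IsBoundedDensity μ c q) : ∀ᵐ ω ∂μ, ‖q ω‖ ≤ c := by
  filter_upwards [hq.ae_bounds] with ω ⟨hq₀, hqc⟩
  rwa [Real.norm_of_nonneg hq₀]

theorem congr {q' : Ω → ℝ} (hq : IsBoundedDensity μ c q) (h : q =ᵐ[μ] q') :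
    IsBoundedDensity μ c q' where
  aestronglyMeasurable := hq.aestronglyMeasurable.congr h
  ae_bounds := by
    filter_upwards [hq.ae_bounds, h] with ω hω hqq'
    rwa [← hqq']
  integral_eq_one := by rw [← integral_congr_ae h, hq.integral_eq_one]

theorem memLp [IsFiniteMeasure μ] (hq : IsBoundedDensity μ c q) (p : ENNReal) : MemLp q p μ :=
  MemLp.of_bound hq.aestronglyMeasurable c hq.ae_norm_le

theorem integrable_mul (hq : IsBoundedDensity μ c q) (hg : Integrable g μ) :
    Integrable (fun ω => g ω * q ω) μ :=
  hg.mul_bdd hq.aestronglyMeasurable hq.ae_norm_le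

theorem integral_mul_eq_add [IsFiniteMeasure μ] (hq : IsBoundedDensity μ c q)
    (hg : Integrable g μ) (β : ℝ) : ∫ ω, g ω * q ω ∂μ = β + ∫ ω, (g ω - β) * q ω ∂μ := by
  have hq_int : Integrable q μ := (hq.memLp 1).integrable le_rfl
  simp_rw [sub_mul]
  rw [integral_sub (hq.integrable_mul hg) (hq_int.const_mul β), integral_const_mul,
    hq.integral_eq_one]
  ring

theorem integral_mul_le [IsFiniteMeasure μ] (hq : IsBoundedDensity μ c q)
    (hg : Integrable g μ) (β : ℝ) : ∫ ω, g ω * q ω ∂μ ≤ β + c * ∫ ω, max (g ω - β) 0 ∂μ := by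
  have hgβ : Integrable (fun ω => g ω - β) μ := hg.sub (integrable_const β)
  rw [hq.integral_mul_eq_add hg β, ← integral_const_mul]
  refine add_le_add_right
    (integral_mono_ae (hq.integrable_mul hgβ) (hgβ.pos_part.const_mul c) ?_) β
  filter_upwards [hq.ae_bounds] with ω ⟨hq₀, hqc⟩
  rcases le_total (g ω - β) 0 with h | h
  · nlinarith [le_max_right (g ω - β) 0]
  · rw [max_eq_left h, mul_comm c]
    exact mul_le_mul_of_nonneg_left hqc h

theorem integral_mul_eq_of_ae_eq [IsFiniteMeasure μ] (hq : IsBoundedDensity μ c q)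
    (hg : Integrable g μ) {β : ℝ} (heq : ∀ᵐ ω ∂μ, (g ω - β) * q ω = c * max (g ω - β) 0) :
    ∫ ω, g ω * q ω ∂μ = β + c * ∫ ω, max (g ω - β) 0 ∂μ := by
  rw [hq.integral_mul_eq_add hg β, ← integral_const_mul, integral_congr_ae heq]

end IsBoundedDensity

theorem exists_isBoundedDensity_mul_sub_eq [IsFiniteMeasure μ] {g : Ω → ℝ} (hg : Measurable g)
    {b c : ℝ}
    (hlow : c * μ.real (g ⁻¹' Ioi b) ≤ 1) (hhigh : 1 ≤ c * μ.real (g ⁻¹' Ici b)) :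
    ∃ q, IsBoundedDensity μ c q ∧ ∀ ω, (g ω - b) * q ω = c * max (g ω - b) 0 := by
  set A := g ⁻¹' Ioi b
  set B := g ⁻¹' {b}
  have hA : MeasurableSet A := hg measurableSet_Ioi
  have hB : MeasurableSet B := hg (measurableSet_singleton b)
  have hAB : μ.real (g ⁻¹' Ici b) = μ.real A + μ.real B := by
    rw [← Ioi_union_left, preimage_union]
    exact measureReal_union ((disjoint_singleton_right.2 (lt_irrefl b)).preimage g) hB
  rw [hAB] at hhigh
  have hc : 0 < c := by
    by_contra! hc
    nlinarith [measureReal_nonneg (μ := μ) (s := A), measureReal_nonneg (μ := μ) (s := B)]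
  -- `t` fills the atom `{g = b}` up to total mass one; if the atom is null, then `t = 0`
  -- (as `x / 0 = 0`) and already `c * μ.real A = 1`.
  set t := (1 - c * μ.real A) / μ.real B
  have ht₀ : 0 ≤ t := div_nonneg (by linarith) measureReal_nonneg
  have htc : t ≤ c := div_le_of_le_mul₀ measureReal_nonneg hc.le (by linarith)
  have htotal : c * μ.real A + t * μ.real B = 1 := by
    rcases eq_or_ne (μ.real B) 0 with hm | hm
    · rw [hm] at hhigh ⊢
      linarith
    · simp only [t, div_mul_cancel₀ _ hm]
      ring
  set q := fun ω => A.indicator (fun _ => c) ω + B.indicator (fun _ => t) ω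
  have hq_meas : Measurable q :=
    (measurable_const.indicator hA).add (measurable_const.indicator hB)
  have hq_cases : ∀ ω, (g ω < b ∧ q ω = 0) ∨ (g ω = b ∧ q ω = t) ∨ (b < g ω ∧ q ω = c) := by
    intro ω
    rcases lt_trichotomy (g ω) b with h | h | h
    · exact Or.inl ⟨h, by simp [q, A, B, h.ne, not_lt.2 h.le]⟩
    · exact Or.inr (Or.inl ⟨h, by simp [q, A, B, h]⟩)
    · exact Or.inr (Or.inr ⟨h, by simp [q, A, B, h, h.ne']⟩)
  refine ⟨q, ⟨hq_meas.aestronglyMeasurable, ae_of_all _ fun ω => ?_, ?_⟩, fun ω => ?_⟩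
  · rcases hq_cases ω with ⟨-, hq⟩ | ⟨-, hq⟩ | ⟨-, hq⟩ <;> rw [hq]
    exacts [⟨le_rfl, hc.le⟩, ⟨ht₀, htc⟩, ⟨hc.le, le_rfl⟩]
  · rw [integral_add ((integrable_const c).indicator hA) ((integrable_const t).indicator hB),
      integral_indicator_const c hA, integral_indicator_const t hB, smul_eq_mul, smul_eq_mul]
    linarith
  · rcases hq_cases ω with ⟨h, hq⟩ | ⟨h, hq⟩ | ⟨h, hq⟩ <;> rw [hq]
    · rw [max_eq_right (by linarith)]
      ring
    · simp [h]
    · rw [max_eq_left (by linarith)]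
      ring

end BoundedDensity

/-- dual representation of CVaR:
`CVaR_α(X) = inf_β {β + (1−α)⁻¹ E[(X−β)₊]}` is attained at some `β*`, and equals
`sup{E[XQ] : Q ∈ L², 0 ≤ Q ≤ (1−α)⁻¹ a.s., E[Q] = 1}`. -/
theorem stmt_9 (α : ℝ) (h0 : 0 < α) (h1 : α < 1) (X : L2 μ) :
    ∃ βs : ℝ,
      (∀ β : ℝ,
        βs + (1 - α)⁻¹ * ∫ ω, max (X ω - βs) 0 ∂μ ≤
        β + (1 - α)⁻¹ * ∫ ω, max (X ω - β) 0 ∂μ) ∧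
      IsLUB {e : ℝ | ∃ Q : L2 μ, (∀ᵐ ω ∂μ, 0 ≤ Q ω ∧ Q ω ≤ (1 - α)⁻¹) ∧
          (∫ ω, Q ω ∂μ) = 1 ∧ e = pairing μ X Q}
        (βs + (1 - α)⁻¹ * ∫ ω, max (X ω - βs) 0 ∂μ) := by
  have hs : 0 < 1 - α := by linarith
  have hX : Integrable X μ := (Lp.memLp X).integrable one_le_two
  have hXm : AEMeasurable X μ := (Lp.aestronglyMeasurable X).aemeasurable
  have hgm : Measurable (hXm.mk X) := hXm.measurable_mk
  obtain ⟨b, hb_low, hb_high⟩ :=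
    exists_measureReal_preimage_Ioi_le_le_Ici (μ := μ) hgm hs (by linarith)
  obtain ⟨q, hq, hq_eq⟩ := exists_isBoundedDensity_mul_sub_eq hgm
    ((inv_mul_le_one₀ hs).2 hb_low) ((one_le_inv_mul₀ hs).2 hb_high)
  set Q : L2 μ := (hq.memLp 2).toLp q
  have hQ : IsBoundedDensity μ (1 - α)⁻¹ Q := hq.congr (hq.memLp 2).coeFn_toLp.symm
  have hval : pairing μ X Q = b + (1 - α)⁻¹ * ∫ ω, max (X ω - b) 0 ∂μ := by
    refine hQ.integral_mul_eq_of_ae_eq hX ?_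
    filter_upwards [hXm.ae_eq_mk, (hq.memLp 2).coeFn_toLp] with ω hXω hQω
    rw [hXω, hQω, hq_eq]
  have hdual : ∀ Q : L2 μ, IsBoundedDensity μ (1 - α)⁻¹ Q → ∀ β,
      pairing μ X Q ≤ β + (1 - α)⁻¹ * ∫ ω, max (X ω - β) 0 ∂μ :=
    fun Q hQ β => hQ.integral_mul_le hX β
  refine ⟨b, fun β => hval ▸ hdual Q hQ β, ?_, ?_⟩
  · rintro e ⟨Q', hQ'_bounds, hQ'_one, rfl⟩
    exact hdual Q' ⟨Lp.aestronglyMeasurable Q', hQ'_bounds, hQ'_one⟩ b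
  · exact fun e he => hval ▸ he ⟨Q, hQ.ae_bounds, hQ.integral_eq_one, rfl⟩
end
end

section
/- Fix 0 ≤ λ ≤ 1 and define ℛ(X) := E[X] + λ‖(X − E[X])₊‖₂ for X ∈ L². Then ℛ is a coherent risk measure on L², i.e. it satisfies (A1)–(A5); in particular, if X ≤ Y a.s. then E[X] + λ‖(X − E[X])₊‖₂ ≤ E[Y] + λ‖(Y − E[Y])₊‖₂. -/
open MeasureTheory Filter Topology

noncomputable section

variable {Ω : Type*} [MeasurableSpace Ω] (μ : Measure Ω) [IsProbabilityMeasure μ]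

/-- The mean-deviation risk measure `ℛ(X) = E[X] + λ‖(X − E[X])₊‖₂`. -/
def meanDev (l : ℝ) (X : L2 μ) : ℝ :=
  (∫ ω, X ω ∂μ) + l * Real.sqrt (∫ ω, (max (X ω - ∫ ω', X ω' ∂μ) 0) ^ 2 ∂μ)

/-!
In `L²` as a Banach lattice, `ℛ(X) = E X + λ ‖(X - E X)⁺‖`. Positive homogeneity and
subadditivity are inherited from the norm and from `x ↦ x⁺`, and continuity from that of `E` and
`⁺`; convexity and closedness follow. Subadditivity reduces monotonicity to `ℛ(Z) ≤ 0` for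
`Z ≤ 0`, which holds since then `0 ≤ (Z - E Z)⁺ ≤ -E Z`, so `λ ‖(Z - E Z)⁺‖ ≤ -E Z` as `λ ≤ 1`.
-/

section NormedLattice

variable {α : Type*} [NormedAddCommGroup α] [Lattice α] [HasSolidNorm α] [IsOrderedAddMonoid α]

lemma norm_posPart_le_norm_of_le {a b : α} (hb : 0 ≤ b) (hab : a ≤ b) : ‖a⁺‖ ≤ ‖b‖ := by
  refine norm_le_norm_of_abs_le_abs ?_
  rw [abs_of_nonneg (posPart_nonneg a), abs_of_nonneg hb]
  exact sup_le hab hb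

lemma norm_posPart_add_le (a b : α) : ‖(a + b)⁺‖ ≤ ‖a⁺‖ + ‖b⁺‖ :=
  calc ‖(a + b)⁺‖ ≤ ‖a⁺ + b⁺‖ :=
        norm_posPart_le_norm_of_le (add_nonneg (posPart_nonneg a) (posPart_nonneg b))
          (add_le_add (le_posPart a) (le_posPart b))
    _ ≤ ‖a⁺‖ + ‖b⁺‖ := norm_add_le _ _

end NormedLattice

section Lp

variable {α : Type*} [MeasurableSpace α] {ν : Measure α}

lemma MeasureTheory.Lp.norm_two_eq_sqrt_integral_sq (f : Lp ℝ 2 ν) :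
    ‖f‖ = √(∫ x, f x ^ 2 ∂ν) := by
  rw [← Real.sqrt_sq (norm_nonneg f), ← real_inner_self_eq_norm_sq, L2.inner_def]
  simp [sq]

lemma MeasureTheory.Lp.coeFn_posPart' {p : ENNReal} (f : Lp ℝ p ν) :
    ⇑f⁺ =ᵐ[ν] fun x => max (f x) 0 := by
  change ⇑(f ⊔ 0) =ᵐ[ν] _
  filter_upwards [Lp.coeFn_sup f 0, Lp.coeFn_zero ℝ p ν] with x hsup hzero
  rw [hsup, Pi.sup_apply, hzero, Pi.zero_apply]

lemma MeasureTheory.Lp.posPart_smul_of_nonneg {p : ENNReal} {c : ℝ} (hc : 0 ≤ c) (f : Lp ℝ p ν) :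
    (c • f)⁺ = c • f⁺ := by
  apply Lp.ext
  filter_upwards [Lp.coeFn_posPart' (c • f), Lp.coeFn_smul c f, Lp.coeFn_smul c f⁺,
    Lp.coeFn_posPart' f] with x h₁ h₂ h₃ h₄
  simp only [h₁, h₂, h₃, h₄, Pi.smul_apply, smul_eq_mul, mul_max_of_nonneg _ _ hc, mul_zero]

end Lp

open scoped InnerProductSpace

lemma constL2_eq_const (c : ℝ) : constL2 μ c = Lp.const 2 μ c := rfl

lemma norm_constL2 (c : ℝ) : ‖constL2 μ c‖ = |c| := by
  simp [constL2_eq_const, Lp.norm_const]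

lemma constL2_nonneg {c : ℝ} (hc : 0 ≤ c) : 0 ≤ constL2 μ c := by
  rw [← Lp.coeFn_nonneg]
  filter_upwards [Lp.coeFn_const 2 μ c] with ω h
  rw [constL2_eq_const, h]
  exact hc

lemma expect_eq_inner (X : L2 μ) : expect μ X = ⟪constL2 μ 1, X⟫_ℝ := by
  rw [constL2_eq_const, ← indicatorConstLp_univ, L2.inner_indicatorConstLp_one]
  simp [expect]

lemma expect_constL2 (c : ℝ) : expect μ (constL2 μ c) = c := by
  rw [expect, constL2_eq_const, integral_congr_ae (Lp.coeFn_const 2 μ c)]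
  simp

lemma expect_nonpos {Z : L2 μ} (hZ : Z ≤ 0) : expect μ Z ≤ 0 := by
  rw [← Lp.coeFn_le] at hZ
  refine integral_nonpos_of_ae ?_
  filter_upwards [hZ, Lp.coeFn_zero ℝ 2 μ] with ω h hzero
  simpa [hzero] using h

def centering : L2 μ →L[ℝ] L2 μ :=
  ContinuousLinearMap.id ℝ (L2 μ) - (Lp.constL 2 μ ℝ).comp (innerSL ℝ (constL2 μ 1))

lemma centering_apply (X : L2 μ) : centering μ X = X - constL2 μ (expect μ X) := by
  simp [centering, expect_eq_inner, constL2_eq_const]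

lemma meanDev_eq_expect_add (l : ℝ) (X : L2 μ) :
    meanDev μ l X = expect μ X + l * ‖(centering μ X)⁺‖ := by
  rw [Lp.norm_two_eq_sqrt_integral_sq, meanDev]
  congr 3
  refine integral_congr_ae ?_
  filter_upwards [Lp.coeFn_posPart' (centering μ X), Lp.coeFn_sub X (constL2 μ (expect μ X)),
    Lp.coeFn_const 2 μ (expect μ X)] with ω h₁ h₂ h₃
  rw [h₁, centering_apply, h₂, Pi.sub_apply, constL2_eq_const, h₃]
  rfl

lemma meanDev_constL2 (l c : ℝ) : meanDev μ l (constL2 μ c) = c := by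
  simp [meanDev_eq_expect_add, centering_apply, expect_constL2]

lemma meanDev_smul (l : ℝ) {c : ℝ} (hc : 0 ≤ c) (X : L2 μ) :
    meanDev μ l (c • X) = c * meanDev μ l X := by
  rw [meanDev_eq_expect_add, meanDev_eq_expect_add, map_smul, Lp.posPart_smul_of_nonneg hc,
    norm_smul, Real.norm_of_nonneg hc, expect_eq_inner, expect_eq_inner, real_inner_smul_right]
  ring

lemma meanDev_add_le {l : ℝ} (hl : 0 ≤ l) (X Y : L2 μ) :
    meanDev μ l (X + Y) ≤ meanDev μ l X + meanDev μ l Y := by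
  have := mul_le_mul_of_nonneg_left (norm_posPart_add_le (centering μ X) (centering μ Y)) hl
  simp only [meanDev_eq_expect_add, map_add, expect_eq_inner, inner_add_right]
  linarith

lemma meanDev_nonpos {l : ℝ} (hl0 : 0 ≤ l) (hl1 : l ≤ 1) {Z : L2 μ} (hZ : Z ≤ 0) :
    meanDev μ l Z ≤ 0 := by
  have hE := expect_nonpos μ hZ
  have hdev : ‖(centering μ Z)⁺‖ ≤ -expect μ Z := by
    calc ‖(centering μ Z)⁺‖ ≤ ‖constL2 μ (-expect μ Z)‖ := by
          refine norm_posPart_le_norm_of_le (constL2_nonneg μ (by linarith)) ?_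
          rw [centering_apply, constL2_eq_const, constL2_eq_const, map_neg]
          simpa [sub_eq_add_neg] using hZ
      _ = -expect μ Z := by rw [norm_constL2, abs_of_nonneg (by linarith)]
  rw [meanDev_eq_expect_add]
  nlinarith [norm_nonneg (centering μ Z)⁺]

lemma meanDev_mono {l : ℝ} (hl0 : 0 ≤ l) (hl1 : l ≤ 1) {X Y : L2 μ} (h : X ≤ Y) :
    meanDev μ l X ≤ meanDev μ l Y :=
  calc meanDev μ l X = meanDev μ l (Y + (X - Y)) := by rw [add_sub_cancel]
    _ ≤ meanDev μ l Y + meanDev μ l (X - Y) := meanDev_add_le μ hl0 _ _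
    _ ≤ meanDev μ l Y := by linarith [meanDev_nonpos μ hl0 hl1 (sub_nonpos.mpr h)]

lemma continuous_meanDev (l : ℝ) : Continuous (meanDev μ l) := by
  have hE : Continuous (expect μ) := by
    rw [funext (expect_eq_inner μ)]
    exact continuous_const.inner continuous_id
  rw [funext (meanDev_eq_expect_add μ l)]
  exact hE.add (continuous_const.mul (continuous_posPart.comp (centering μ).continuous).norm)

/-- for `0 ≤ λ ≤ 1`, the mean-deviation functional
`X ↦ E[X] + λ‖(X − E[X])₊‖₂` is a coherent risk measure on `L²`; in particular it is
monotone with respect to the a.s. order. -/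
theorem stmt_10 (l : ℝ) (h0 : 0 ≤ l) (h1 : l ≤ 1) :
    IsCoherent μ (fun X => ((meanDev μ l X : ℝ) : EReal)) ∧
    ∀ X Y : L2 μ, (⇑X ≤ᵐ[μ] ⇑Y) → meanDev μ l X ≤ meanDev μ l Y := by
  have mono (X Y : L2 μ) (h : ⇑X ≤ᵐ[μ] ⇑Y) : meanDev μ l X ≤ meanDev μ l Y :=
    meanDev_mono μ h0 h1 ((Lp.coeFn_le X Y).mp h)
  refine ⟨⟨fun X => EReal.coe_ne_bot _, fun C => by rw [meanDev_constL2], ?_,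
    fun X Y h => EReal.coe_le_coe_iff.mpr (mono X Y h), ?_, ?_⟩, mono⟩
  · intro X X' t ht0 ht1
    rw [← EReal.coe_mul, ← EReal.coe_mul, ← EReal.coe_add, EReal.coe_le_coe_iff]
    calc meanDev μ l ((1 - t) • X + t • X')
        ≤ meanDev μ l ((1 - t) • X) + meanDev μ l (t • X') := meanDev_add_le μ h0 _ _
      _ = (1 - t) * meanDev μ l X + t * meanDev μ l X' := by
        rw [meanDev_smul μ l (sub_nonneg.mpr ht1), meanDev_smul μ l ht0]
  · intro Xk X hXk hle
    have hlim := (continuous_meanDev μ l).tendsto X |>.comp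
      (tendsto_iff_norm_sub_tendsto_zero.mpr hXk)
    exact EReal.coe_nonpos.mpr (le_of_tendsto' hlim fun k => EReal.coe_nonpos.mp (hle k))
  · intro X c hc
    rw [meanDev_smul μ l hc.le, EReal.coe_mul]
end
end

section
/- Let 0 ≤ γ₂ < 1 < γ₁ and define S_r(X) := inf_{β ∈ ℝ} { β + E[γ₁(X−β)₊ − γ₂(β−X)₊] } for X ∈ L². Then S_r(X) ≥ E[X] for every X ∈ L², and S_r(X) = E[X] if and only if X is a.s. equal to a constant. Consequently the OCE-type risk measure S_r is averse. -/
/-!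
Since `γ₁ (x - β)₊ - γ₂ (β - x)₊ ≥ (x - β) + κ |x - β|` with `κ = min (γ₁ - 1) (1 - γ₂) > 0`,
every value of the objective is at least `E[X] + κ E|X - β| ≥ E[X] + (κ / 2) E|X - E[X]|`.
The infimum therefore exceeds `E[X]` unless `E|X - E[X]| = 0`, i.e. `X` is a.s. constant, and
for `X = c` a.s. the choice `β = c` attains `E[X]`.
-/

open MeasureTheory Filter Topology

noncomputable section

variable {Ω : Type*} [MeasurableSpace Ω] (μ : Measure Ω) [IsProbabilityMeasure μ]

lemma sub_add_mul_abs_sub_le {γ₁ γ₂ κ : ℝ} (hκ₁ : κ ≤ γ₁ - 1) (hκ₂ : κ ≤ 1 - γ₂) (x β : ℝ) :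
    x - β + κ * |x - β| ≤ γ₁ * max (x - β) 0 - γ₂ * max (β - x) 0 := by
  rcases le_total x β with h | h
  · rw [max_eq_right (by linarith), max_eq_left (by linarith), abs_of_nonpos (by linarith)]
    nlinarith
  · rw [max_eq_left (by linarith), max_eq_right (by linarith), abs_of_nonneg (by linarith)]
    nlinarith

section Integrals

variable {μ} {f : Ω → ℝ}

lemma integral_abs_sub_integral_le_two_mul (hf : Integrable f μ) (β : ℝ) :
    ∫ ω, |f ω - ∫ ω', f ω' ∂μ| ∂μ ≤ 2 * ∫ ω, |f ω - β| ∂μ := by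
  have hfβ : Integrable (fun ω => |f ω - β|) μ := (hf.sub (integrable_const β)).abs
  have hmean : |β - ∫ ω, f ω ∂μ| ≤ ∫ ω, |f ω - β| ∂μ :=
    calc |β - ∫ ω, f ω ∂μ| = |∫ ω, (f ω - β) ∂μ| := by
          rw [integral_sub hf (integrable_const β), integral_const, probReal_univ, one_smul,
            abs_sub_comm]
      _ ≤ ∫ ω, |f ω - β| ∂μ := abs_integral_le_integral_abs
  calc ∫ ω, |f ω - ∫ ω', f ω' ∂μ| ∂μ ≤ ∫ ω, (|f ω - β| + |β - ∫ ω', f ω' ∂μ|) ∂μ :=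
        integral_mono (hf.sub (integrable_const _)).abs (hfβ.add (integrable_const _))
          fun ω => abs_sub_le _ _ _
    _ = ∫ ω, |f ω - β| ∂μ + |β - ∫ ω', f ω' ∂μ| := by
        rw [integral_add hfβ (integrable_const _), integral_const, probReal_univ, one_smul]
    _ ≤ 2 * ∫ ω, |f ω - β| ∂μ := by linarith

lemma ae_eq_const_of_integral_abs_sub_le_zero (hf : Integrable f μ) {c : ℝ}
    (h : ∫ ω, |f ω - c| ∂μ ≤ 0) : f =ᵐ[μ] fun _ => c := by
  have hzero : (fun ω => |f ω - c|) =ᵐ[μ] 0 :=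
    (integral_eq_zero_iff_of_nonneg (fun ω => abs_nonneg _)
      (hf.sub (integrable_const c)).abs).mp
      (le_antisymm h (integral_nonneg fun ω => abs_nonneg _))
  filter_upwards [hzero] with ω hω
  exact sub_eq_zero.mp (abs_eq_zero.mp hω)

lemma integral_add_mul_integral_abs_sub_le {γ₁ γ₂ κ : ℝ} (hκ₁ : κ ≤ γ₁ - 1) (hκ₂ : κ ≤ 1 - γ₂)
    (hf : Integrable f μ) (β : ℝ) :
    ∫ ω, f ω ∂μ + κ * ∫ ω, |f ω - β| ∂μ
      ≤ β + ∫ ω, (γ₁ * max (f ω - β) 0 - γ₂ * max (β - f ω) 0) ∂μ := by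
  have hfβ : Integrable (fun ω => f ω - β) μ := hf.sub (integrable_const β)
  have hloss : Integrable (fun ω => γ₁ * max (f ω - β) 0 - γ₂ * max (β - f ω) 0) μ :=
    (hfβ.pos_part.const_mul γ₁).sub (((integrable_const β).sub hf).pos_part.const_mul γ₂)
  calc ∫ ω, f ω ∂μ + κ * ∫ ω, |f ω - β| ∂μ = β + ∫ ω, (f ω - β + κ * |f ω - β|) ∂μ := by
        rw [integral_add hfβ (hfβ.abs.const_mul κ), integral_sub hf (integrable_const β),
          integral_const, probReal_univ, one_smul, integral_const_mul]
        ring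
    _ ≤ β + ∫ ω, (γ₁ * max (f ω - β) 0 - γ₂ * max (β - f ω) 0) ∂μ :=
        add_le_add_right (integral_mono (hfβ.add (hfβ.abs.const_mul κ)) hloss
          fun ω => sub_add_mul_abs_sub_le hκ₁ hκ₂ (f ω) β) β

lemma objective_eq_integral_of_ae_eq_const {γ₁ γ₂ c : ℝ} (hc : f =ᵐ[μ] fun _ => c) :
    c + ∫ ω, (γ₁ * max (f ω - c) 0 - γ₂ * max (c - f ω) 0) ∂μ = ∫ ω, f ω ∂μ := by
  have hzero : (fun ω => γ₁ * max (f ω - c) 0 - γ₂ * max (c - f ω) 0) =ᵐ[μ] 0 := by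
    filter_upwards [hc] with ω hω
    simp [hω]
  rw [integral_congr_ae hzero, integral_congr_ae hc]
  simp

end Integrals

theorem stmt_15 (γ₁ γ₂ : ℝ) (h21 : γ₂ < 1) (h1 : 1 < γ₁) (X : L2 μ) :
    ∃ m : ℝ,
      IsGLB {e : ℝ | ∃ β : ℝ,
          e = β + ∫ ω, (γ₁ * max (X ω - β) 0 - γ₂ * max (β - X ω) 0) ∂μ} m ∧
      (∫ ω, X ω ∂μ) ≤ m ∧
      (m = ∫ ω, X ω ∂μ ↔ ∃ c : ℝ, ⇑X =ᵐ[μ] fun _ => c) := by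
  set S := {e : ℝ | ∃ β : ℝ,
    e = β + ∫ ω, (γ₁ * max (X ω - β) 0 - γ₂ * max (β - X ω) 0) ∂μ}
  set D := ∫ ω, |X ω - ∫ ω', X ω' ∂μ| ∂μ
  have hX : Integrable X μ := (Lp.memLp X).integrable one_le_two
  obtain ⟨κ, hκ, hκ₁, hκ₂⟩ : ∃ κ : ℝ, 0 < κ ∧ κ ≤ γ₁ - 1 ∧ κ ≤ 1 - γ₂ :=
    ⟨min (γ₁ - 1) (1 - γ₂), lt_min (by linarith) (by linarith), min_le_left _ _, min_le_right _ _⟩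
  have hbound : ∀ e ∈ S, ∫ ω, X ω ∂μ + κ / 2 * D ≤ e := by
    rintro e ⟨β, rfl⟩
    have := integral_add_mul_integral_abs_sub_le hκ₁ hκ₂ hX β
    nlinarith [integral_abs_sub_integral_le_two_mul hX β]
  have hD : 0 ≤ D := integral_nonneg fun ω => abs_nonneg _
  have hS : S.Nonempty := ⟨_, 0, rfl⟩
  have hSD : ∫ ω, X ω ∂μ + κ / 2 * D ≤ sInf S := le_csInf hS hbound
  have hlb : ∫ ω, X ω ∂μ ≤ sInf S := (le_add_of_nonneg_right (mul_nonneg (by positivity) hD)).trans hSD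
  refine ⟨sInf S, Real.isGLB_sInf hS ⟨_, hbound⟩, hlb, fun hm => ?_, fun ⟨c, hc⟩ => ?_⟩
  · exact ⟨_, ae_eq_const_of_integral_abs_sub_le_zero hX (by nlinarith)⟩
  · exact le_antisymm (csInf_le ⟨_, hbound⟩ ⟨c, (objective_eq_integral_of_ae_eq_const hc).symm⟩) hlb
end
end

section
/- Let Ω = Ω₁ ∪ ⋯ ∪ Ω_r be a partition of Ω into measurable sets with P₀(Ω_k) > 0 for each k and r ≥ 2, and let λ₁,…,λ_r > 0 with λ₁+⋯+λ_r = 1. Define the risk measure from subdividing the future ℛ(X) := Σ_{k=1}^r λ_k · inf{a ∈ ℝ : P₀({X > a} ∩ Ω_k) = 0}. Then ℛ is not averse: there exists X ∈ L², not a.s. equal to a constant, with ℛ(X) ≤ E[X]. -/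
open MeasureTheory Filter Topology

noncomputable section

variable {Ω : Type*} [MeasurableSpace Ω] (μ : Measure Ω) [IsProbabilityMeasure μ]

/-! Take `X = c · 1_{Ω₁}` with `c = ±1`. Its essential supremum is `c` on `Ω₁` and `0` on every
other `Ω_k`, so `ℛ(X) = λ₁ c` while `E[X] = P₀(Ω₁) c`; choosing the sign of `c` with
`λ₁ c ≤ P₀(Ω₁) c` gives the inequality. `X` is not a.s. constant because it takes the different
values `c` and `0` on the sets `Ω₁` and `Ω₂` of positive measure. -/

def essSupOn {α : Type*} [MeasurableSpace α] (ν : Measure α) (f : α → ℝ) (A : Set α) : EReal :=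
  sInf {y : EReal | ∃ a : ℝ, y = (a : EReal) ∧ ν ({ω | a < f ω} ∩ A) = 0}

section

variable {α : Type*} [MeasurableSpace α] {ν : Measure α} {f : α → ℝ} {A : Set α}

theorem eq_of_ae_restrict_eq_const {c d : ℝ} (hA : ν A ≠ 0)
    (hc : f =ᵐ[ν.restrict A] fun _ => c) (hd : f =ᵐ[ν.restrict A] fun _ => d) : c = d := by
  have : NeBot (ae (ν.restrict A)) := ae_neBot.2 (Measure.restrict_eq_zero.not.2 hA)
  exact eventually_const.1 (hc.symm.trans hd)

theorem essSupOn_eq_of_ae_restrict_eq_const {c : ℝ} (hA : MeasurableSet A) (hνA : ν A ≠ 0)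
    (hf : f =ᵐ[ν.restrict A] fun _ => c) : essSupOn ν f A = c := by
  have : NeBot (ae (ν.restrict A)) := ae_neBot.2 (Measure.restrict_eq_zero.not.2 hνA)
  have null_iff : ∀ a : ℝ, ν ({ω | a < f ω} ∩ A) = 0 ↔ c ≤ a := fun a =>
    calc ν ({ω | a < f ω} ∩ A) = 0 ↔ ∀ᵐ ω ∂ν.restrict A, f ω ≤ a := by
          rw [ae_iff, Measure.restrict_apply' hA]; simp only [not_le]
      _ ↔ ∀ᵐ ω ∂ν.restrict A, c ≤ a := eventually_congr (hf.mono fun ω h => by rw [h])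
      _ ↔ c ≤ a := eventually_const
  refine le_antisymm (sInf_le ⟨c, rfl, (null_iff c).2 le_rfl⟩) (le_sInf ?_)
  rintro _ ⟨a, rfl, ha⟩
  exact EReal.coe_le_coe_iff.2 ((null_iff a).1 ha)

theorem not_exists_ae_eq_const_of_ae_restrict {B : Set α} {c d : ℝ} (hA : ν A ≠ 0)
    (hB : ν B ≠ 0) (hfA : f =ᵐ[ν.restrict A] fun _ => c) (hfB : f =ᵐ[ν.restrict B] fun _ => d)
    (hcd : c ≠ d) : ¬ ∃ e : ℝ, f =ᵐ[ν] fun _ => e := by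
  rintro ⟨e, he⟩
  exact hcd ((eq_of_ae_restrict_eq_const hA hfA (ae_restrict_of_ae he)).trans
    (eq_of_ae_restrict_eq_const hB (ae_restrict_of_ae he) hfB))

theorem indicator_ae_restrict_eq_zero_of_disjoint {B : Set α} {c : ℝ} (hA : MeasurableSet A)
    (hAB : Disjoint A B) : A.indicator (fun _ => c) =ᵐ[ν.restrict B] fun _ => 0 :=
  ae_restrict_of_ae_restrict_of_subset hAB.subset_compl_left (indicator_ae_eq_restrict_compl hA)

end

theorem exists_ne_zero_mul_le_mul (a b : ℝ) : ∃ c : ℝ, c ≠ 0 ∧ a * c ≤ b * c := by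
  rcases le_total a b with h | h
  · exact ⟨1, one_ne_zero, by linarith⟩
  · exact ⟨-1, by norm_num, by linarith⟩

theorem stmt_17 {r : ℕ} (hr : 2 ≤ r) (P : Fin r → Set Ω)
    (hmeas : ∀ k, MeasurableSet (P k))
    (hdisj : Pairwise (Function.onFun Disjoint P))
    (hpos : ∀ k, 0 < μ (P k))
    (l : Fin r → ℝ) :
    ∃ X : L2 μ, (¬ ∃ c : ℝ, ⇑X =ᵐ[μ] fun _ => c) ∧
      (∑ k, (l k : EReal) *
          sInf {y : EReal | ∃ a : ℝ, y = (a : EReal) ∧ μ ({ω | a < X ω} ∩ P k) = 0})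
        ≤ ((∫ ω, X ω ∂μ : ℝ) : EReal) := by
  let i : Fin r := ⟨0, by omega⟩
  obtain ⟨c, hc, hlc⟩ := exists_ne_zero_mul_le_mul (l i) (μ.real (P i))
  let X : L2 μ := indicatorConstLp 2 (hmeas i) (measure_ne_top μ _) c
  have hX : ⇑X =ᵐ[μ] (P i).indicator fun _ => c := indicatorConstLp_coeFn
  have hX_i : ⇑X =ᵐ[μ.restrict (P i)] fun _ => c :=
    (hX.filter_mono ae_restrict_le).trans (indicator_ae_eq_restrict (hmeas i))
  have hX_ne : ∀ k ≠ i, ⇑X =ᵐ[μ.restrict (P k)] fun _ => 0 := fun k hk =>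
    (hX.filter_mono ae_restrict_le).trans
      (indicator_ae_restrict_eq_zero_of_disjoint (hmeas i) (hdisj hk.symm))
  have hj : (⟨1, hr⟩ : Fin r) ≠ i := by simp [i, Fin.ext_iff]
  refine ⟨X, not_exists_ae_eq_const_of_ae_restrict (hpos i).ne' (hpos _).ne' hX_i
    (hX_ne _ hj) hc, ?_⟩
  change ∑ k, (l k : EReal) * essSupOn μ X (P k) ≤ _
  rw [Finset.sum_eq_single i (fun k _ hk => by
      rw [essSupOn_eq_of_ae_restrict_eq_const (hmeas k) (hpos k).ne' (hX_ne k hk),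
        EReal.coe_zero, mul_zero]) (by simp),
    essSupOn_eq_of_ae_restrict_eq_const (hmeas i) (hpos i).ne' hX_i, integral_indicatorConstLp]
  exact_mod_cast hlc
end
end
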